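/- arXiv:2405.09489 — 5 statements merged into one kernel-verified Lean document; each statement's English description precedes it below -/
import Mathlib

section
/- Let H be a fixed finite graph with at least one edge and no isolated vertices, and define m(H) := max over nonempty subgraphs Γ ⊆ H (nonempty subsets of edges, V(Γ) the set of their endpoints) of |E(Γ)|/|V(Γ)|. Let p = p(n) and d = d(n) be sequences satisfying p(n)·(n/(d(n)+1))^{1/m(H)} → ∞ as n → ∞. Then for any sequence of d(n)-dependent random graph distributions G ~ G_{n,p(n),d(n)} on n vertices, the probability that G contains a copy of H tends to 1 as n → ∞. -/
open MeasureTheory ProbabilityTheory Filter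

abbrev EdgeIdx (n : ℕ) := {e : Sym2 (Fin n) // ¬ e.IsDiag}

structure DepRandomGraph (n : ℕ) (p : ℝ) (d : ℕ) where
  Ω : Type
  m : MeasurableSpace Ω
  μ : @MeasureTheory.Measure Ω m
  isProb : @MeasureTheory.IsProbabilityMeasure Ω m μ
  X : EdgeIdx n → Ω → Bool
  meas : ∀ e, @Measurable Ω Bool m ⊤ (X e)
  probX : ∀ e, μ {ω | X e ω = true} = ENNReal.ofReal p
  D : SimpleGraph (EdgeIdx n)
  degBound : ∀ e, (D.neighborSet e).ncard ≤ d
  indep : ∀ e, @ProbabilityTheory.Indep Ω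
      (MeasurableSpace.comap (X e) ⊤)
      (⨆ f ∈ {f : EdgeIdx n | f ≠ e ∧ ¬ D.Adj e f}, MeasurableSpace.comap (X f) ⊤)
      m μ

attribute [instance] DepRandomGraph.m DepRandomGraph.isProb

def DepRandomGraph.graph {n : ℕ} {p : ℝ} {d : ℕ} (G : DepRandomGraph n p d) (ω : G.Ω) :
    SimpleGraph (Fin n) :=
  SimpleGraph.fromEdgeSet {e : Sym2 (Fin n) | ∃ h : ¬ e.IsDiag, G.X ⟨e, h⟩ ω = true}

noncomputable def DepRandomGraph.deg {n : ℕ} {p : ℝ} {d : ℕ} (G : DepRandomGraph n p d)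
    (ω : G.Ω) (v : Fin n) : ℕ :=
  {u | (G.graph ω).Adj v u}.ncard

noncomputable def DepRandomGraph.eAB {n : ℕ} {p : ℝ} {d : ℕ} (G : DepRandomGraph n p d)
    (ω : G.Ω) (A B : Finset (Fin n)) : ℕ :=
  {q : Fin n × Fin n | q.1 ∈ A ∧ q.2 ∈ B ∧ (G.graph ω).Adj q.1 q.2}.ncard

def ContainsCopy {n : ℕ} {α : Type*} (G' : SimpleGraph (Fin n)) (H : SimpleGraph α) : Prop :=
  ∃ f : α → Fin n, Function.Injective f ∧ ∀ u v, H.Adj u v → G'.Adj (f u) (f v)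

/-- The number of vertices covered by a finite set of edges. -/
noncomputable def edgeVertCount {α : Type*} (Γ : Finset (Sym2 α)) : ℕ :=
  {v : α | ∃ e ∈ Γ, v ∈ e}.ncard

/-- The edge cover number of a finite set of edges: the minimum size of a subset `A ⊆ Γ`
such that every edge of `Γ` shares an endpoint with some edge of `A`. -/
noncomputable def coverNum {α : Type*} (Γ : Finset (Sym2 α)) : ℕ :=
  sInf {k : ℕ | ∃ A ⊆ Γ, A.card = k ∧ ∀ e ∈ Γ, ∃ a ∈ A, ∃ v : α, v ∈ e ∧ v ∈ a}

/-!
Second moment method over the copies of `H` whose edge images are pairwise non-adjacent in the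
dependency graph `D`; once `n ≫ d` there are still order `n^v(H)` of them. For such a copy `f` the
edge indicators are jointly independent, so all its edges are present with probability
`p^e(H)`. For two such copies `f, g`, the edges of `f` together with the edges of `g` outside the
`D`-closure of `f` again form an independent set. If `Γ` is the set of edges of `H` that `g` maps
into that closure, the vertices spanned by `Γ` are sent among the `O(d + 1)` endpoints of the
closure, so there are `O((d + 1)^v(Γ) n^(v(H) - v(Γ)))` such `g`, each contributing
`p^(2e(H) - e(Γ))`. As `e(Γ) ≤ m(H) v(Γ)`, each such term is `O(1/w)` times the squared first
moment, where `w = p (n/(d+1))^(1/m(H)) → ∞`, and the Chung–Erdős inequality gives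
`P(H ⊆ G) ≥ 1 - O(1/w)`.
-/

open Finset
open scoped ENNReal

section SecondMoment

variable {Ω : Type*} [MeasurableSpace Ω] {μ : Measure Ω}

theorem lintegral_sq_le_measure_mul_lintegral_sq {f : Ω → ℝ≥0∞} (hf : AEMeasurable f μ)
    {s : Set Ω} (hs : MeasurableSet s) (hfs : ∀ ω ∉ s, f ω = 0) :
    (∫⁻ ω, f ω ∂μ) ^ 2 ≤ μ s * ∫⁻ ω, f ω ^ 2 ∂μ := by
  have hsplit : ∀ ω, f ω = s.indicator 1 ω ^ (2⁻¹ : ℝ) * (f ω ^ 2) ^ (2⁻¹ : ℝ) := by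
    intro ω
    by_cases hω : ω ∈ s
    · rw [Set.indicator_of_mem hω, Pi.one_apply, ENNReal.one_rpow, one_mul,
        ← ENNReal.rpow_natCast, ← ENNReal.rpow_mul]
      norm_num
    · simp [hω, hfs ω hω]
  have hCS := ENNReal.lintegral_mul_norm_pow_le (measurable_one.indicator hs).aemeasurable
    (hf.pow_const 2) (by norm_num : (0 : ℝ) ≤ 2⁻¹) (by norm_num : (0 : ℝ) ≤ 2⁻¹) (by norm_num)
  rw [lintegral_indicator_one hs, ← lintegral_congr hsplit] at hCS
  calc (∫⁻ ω, f ω ∂μ) ^ 2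
      ≤ (μ s ^ (2⁻¹ : ℝ) * (∫⁻ ω, f ω ^ 2 ∂μ) ^ (2⁻¹ : ℝ)) ^ 2 := by gcongr
    _ = μ s * ∫⁻ ω, f ω ^ 2 ∂μ := by
      rw [mul_pow, ← ENNReal.rpow_natCast, ← ENNReal.rpow_natCast, ← ENNReal.rpow_mul,
        ← ENNReal.rpow_mul]
      norm_num

theorem sq_sum_measure_le_measure_biUnion_mul {ι : Type*} (I : Finset ι) {A : ι → Set Ω}
    (hA : ∀ i ∈ I, MeasurableSet (A i)) :
    (∑ i ∈ I, μ (A i)) ^ 2 ≤ μ (⋃ i ∈ I, A i) * ∑ i ∈ I, ∑ j ∈ I, μ (A i ∩ A j) := by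
  set N : Ω → ℝ≥0∞ := fun ω => ∑ i ∈ I, (A i).indicator 1 ω
  have hN : ∫⁻ ω, N ω ∂μ = ∑ i ∈ I, μ (A i) := by
    rw [lintegral_finsetSum _ fun i hi => measurable_one.indicator (hA i hi)]
    exact sum_congr rfl fun i hi => lintegral_indicator_one (hA i hi)
  have hN2 : ∫⁻ ω, N ω ^ 2 ∂μ = ∑ i ∈ I, ∑ j ∈ I, μ (A i ∩ A j) := by
    have hpt : ∀ ω, N ω ^ 2 = ∑ i ∈ I, ∑ j ∈ I, (A i ∩ A j).indicator 1 ω := fun ω => by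
      simp only [N, sq, sum_mul_sum, Set.inter_indicator_one, Pi.mul_apply]
    simp_rw [hpt]
    rw [lintegral_finsetSum _ fun i hi => Finset.measurable_sum _ fun j hj =>
      measurable_one.indicator ((hA i hi).inter (hA j hj))]
    refine sum_congr rfl fun i hi => ?_
    rw [lintegral_finsetSum _ fun j hj => measurable_one.indicator ((hA i hi).inter (hA j hj))]
    exact sum_congr rfl fun j hj => lintegral_indicator_one ((hA i hi).inter (hA j hj))
  rw [← hN, ← hN2]
  refine lintegral_sq_le_measure_mul_lintegral_sq
    (Finset.measurable_sum _ fun i hi => measurable_one.indicator (hA i hi)).aemeasurable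
    (I.measurableSet_biUnion hA) fun ω hω => sum_eq_zero fun i hi => ?_
  exact Set.indicator_of_notMem (fun h => hω (Set.mem_biUnion hi h)) _

theorem one_sub_le_measure_biUnion [IsProbabilityMeasure μ] {ι : Type*} (I : Finset ι)
    {A : ι → Set Ω} (hA : ∀ i ∈ I, MeasurableSet (A i)) {δ : ℝ≥0∞}
    (h0 : ∑ i ∈ I, μ (A i) ≠ 0)
    (h : ∑ i ∈ I, ∑ j ∈ I, μ (A i ∩ A j) ≤ (1 + δ) * (∑ i ∈ I, μ (A i)) ^ 2) :
    1 - δ ≤ μ (⋃ i ∈ I, A i) := by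
  set S := ∑ i ∈ I, μ (A i)
  have hS : S ^ 2 ≠ ⊤ := ENNReal.pow_ne_top (ENNReal.sum_ne_top.2 fun i _ => measure_ne_top μ _)
  have hle : 1 * S ^ 2 ≤ (μ (⋃ i ∈ I, A i) * (1 + δ)) * S ^ 2 := by
    rw [one_mul, mul_assoc]
    exact (sq_sum_measure_le_measure_biUnion_mul I hA).trans (by gcongr)
  rw [tsub_le_iff_right]
  calc 1 ≤ μ (⋃ i ∈ I, A i) * (1 + δ) := (ENNReal.mul_le_mul_iff_left (pow_ne_zero 2 h0) hS).1 hle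
    _ ≤ μ (⋃ i ∈ I, A i) + δ := by
      rw [mul_add, mul_one]
      gcongr
      exact mul_le_of_le_one_left' prob_le_one

end SecondMoment

namespace SimpleGraph

variable {V : Type*} [Fintype V] [DecidableEq V] (D : SimpleGraph V) [DecidableRel D.Adj]

def nbhdClosure (S : Finset V) : Finset V := S ∪ S.biUnion fun v => D.neighborFinset v

lemma card_nbhdClosure_le {k : ℕ} (hk : ∀ v, D.degree v ≤ k) (S : Finset V) :
    #(D.nbhdClosure S) ≤ #S * (k + 1) :=
  calc #(D.nbhdClosure S) ≤ #S + ∑ v ∈ S, #(D.neighborFinset v) :=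
        (card_union_le _ _).trans (Nat.add_le_add_left card_biUnion_le _)
    _ ≤ #S + ∑ _v ∈ S, k := by gcongr with v; exact hk v
    _ = #S * (k + 1) := by rw [sum_const, smul_eq_mul]; ring

variable {D}

lemma IsIndepSet.union_sdiff_nbhdClosure {S T : Finset V} (hS : D.IsIndepSet (S : Set V))
    (hT : D.IsIndepSet (T : Set V)) : D.IsIndepSet ↑(S ∪ (T \ D.nbhdClosure S)) := by
  have hfar : ∀ s ∈ S, ∀ t ∈ T \ D.nbhdClosure S, ¬ D.Adj s t := fun s hs t ht hst =>
    (mem_sdiff.1 ht).2 (mem_union_right _ (mem_biUnion.2 ⟨s, hs, (mem_neighborFinset _ _ _).2 hst⟩))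
  intro s hs t ht hne
  simp only [coe_union, coe_sdiff, Set.mem_union, Set.mem_sdiff, mem_coe] at hs ht
  rcases hs with hs | hs <;> rcases ht with ht | ht
  · exact hS hs ht hne
  · exact hfar s hs t (mem_sdiff.2 ht)
  · exact fun h => hfar t ht s (mem_sdiff.2 hs) h.symm
  · exact hT hs.1 ht.1 hne

end SimpleGraph

namespace DepRandomGraph

lemma p_le_one {n : ℕ} {p : ℝ} {d : ℕ} (G : DepRandomGraph n p d) (hn : 2 ≤ n) : p ≤ 1 := by
  have e : EdgeIdx n := ⟨s(⟨0, by omega⟩, ⟨1, by omega⟩), by simp⟩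
  rw [← ENNReal.ofReal_le_one, ← G.probX e]
  exact prob_le_one

variable {n : ℕ} {p : ℝ} {d : ℕ} (G : DepRandomGraph n p d)

lemma degree_le [DecidableRel G.D.Adj] (s : EdgeIdx n) : G.D.degree s ≤ d := by
  rw [← SimpleGraph.card_neighborFinset_eq_degree, SimpleGraph.neighborFinset,
    ← Set.ncard_eq_toFinset_card']
  exact G.degBound s

def present (S : Finset (EdgeIdx n)) : Set G.Ω := {ω | ∀ s ∈ S, G.X s ω = true}

lemma present_eq_biInter (S : Finset (EdgeIdx n)) :
    G.present S = ⋂ s ∈ S, G.X s ⁻¹' {true} := by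
  ext ω; simp [present]

lemma measurableSet_present (S : Finset (EdgeIdx n)) : MeasurableSet (G.present S) := by
  rw [present_eq_biInter]
  exact S.measurableSet_biInter fun s _ => G.meas s trivial

lemma present_union (S T : Finset (EdgeIdx n)) :
    G.present (S ∪ T) = G.present S ∩ G.present T := by
  ext ω; simp [present, or_imp, forall_and]

lemma present_anti {S T : Finset (EdgeIdx n)} (h : S ⊆ T) : G.present T ⊆ G.present S :=
  fun _ hω s hs => hω s (h hs)

lemma measure_present_of_isIndepSet {S : Finset (EdgeIdx n)}
    (hS : G.D.IsIndepSet (S : Set (EdgeIdx n))) :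
    G.μ (G.present S) = ENNReal.ofReal p ^ #S := by
  classical
  induction S using Finset.induction_on with
  | empty => simp [present]
  | @insert s S hs ih =>
    have hrest : MeasurableSet[⨆ f ∈ {f | f ≠ s ∧ ¬ G.D.Adj s f},
        MeasurableSpace.comap (G.X f) ⊤] (G.present S) := by
      rw [present_eq_biInter]
      refine S.measurableSet_biInter fun t ht => ?_
      have hts : t ≠ s := fun h => hs (h ▸ ht)
      refine le_iSup₂ (f := fun f (_ : f ∈ {f | f ≠ s ∧ ¬ G.D.Adj s f}) =>
        MeasurableSpace.comap (G.X f) ⊤) t ⟨hts, ?_⟩ _ ⟨{true}, trivial, rfl⟩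
      exact hS (by simp) (by simp [ht]) hts.symm
    have hs' : G.present {s} = G.X s ⁻¹' {true} := by ext; simp [present]
    rw [insert_eq, present_union, hs', (Indep_iff _ _ _).1 (G.indep s) _ _ ⟨{true}, trivial, rfl⟩
      hrest, ← insert_eq, card_insert_of_notMem hs, pow_succ', ih (hS.mono (by simp))]
    simp only [Set.preimage, Set.mem_singleton_iff]
    rw [G.probX]

end DepRandomGraph

lemma div_pow_le_pow_of_le_mul {m b w q : ℝ} {e k : ℕ} (hm : 0 < m) (hb : 1 ≤ b) (hw : 1 ≤ w)
    (hq : q * b ^ (1 / m) = w) (he : 1 ≤ e) (hek : (e : ℝ) ≤ m * k) : w / b ^ k ≤ q ^ e := by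
  have hb0 : 0 < b ^ (1 / m) := by positivity
  have hexp : (b ^ (1 / m)) ^ e ≤ b ^ k := by
    rw [← Real.rpow_natCast, ← Real.rpow_mul (by linarith), ← Real.rpow_natCast b k]
    exact Real.rpow_le_rpow_of_exponent_le hb
      (by rw [one_div_mul_eq_div, div_le_iff₀ hm]; linarith)
  have hq' : q = w / b ^ (1 / m) := by rw [← hq, mul_div_cancel_right₀ _ hb0.ne']
  rw [hq', div_pow]
  exact div_le_div₀ (by positivity) (le_self_pow₀ hw (by omega)) (by positivity) hexp

-- Read with `M` the number of independent copies, `k = v(Γ)` and `q = p ^ e(Γ)`: the summand of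
-- `overlapBound` for `Γ` is `O(M p ^ (2 e(H)) / w)`.
lemma natCast_le_mul_pow {n d E v k : ℕ} {b w M q : ℝ} (hn : 0 < n) (hb : b = n / (d + 1))
    (hE : 1 ≤ E) (hk : k ≤ v) (hw : 0 < w) (hM : (n : ℝ) ^ v / 2 ^ (v + 1) ≤ M)
    (hq : w / b ^ k ≤ q) :
    (((2 * (E * (d + 1))) ^ k * n ^ (v - k) : ℕ) : ℝ) ≤ 2 ^ (v + 1) * (2 * E) ^ v / w * M * q := by
  have hn' : (0 : ℝ) < n := by exact_mod_cast hn
  have hb0 : 0 ≤ b := hb ▸ by positivity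
  have hM0 : 0 ≤ M := le_trans (by positivity) hM
  calc (((2 * (E * (d + 1))) ^ k * n ^ (v - k) : ℕ) : ℝ)
      = (2 * E : ℝ) ^ k * (((d : ℝ) + 1) ^ k * (n : ℝ) ^ (v - k)) := by
        push_cast; rw [mul_pow, mul_pow]; ring
    _ ≤ (2 * E : ℝ) ^ v * (((d : ℝ) + 1) ^ k * (n : ℝ) ^ (v - k)) := by
        gcongr
        · have : (1 : ℝ) ≤ E := by exact_mod_cast hE
          linarith
    _ = 2 ^ (v + 1) * (2 * E) ^ v / w * ((n : ℝ) ^ v / 2 ^ (v + 1)) * (w / b ^ k) := by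
        rw [hb, div_pow, ← pow_sub_mul_pow (n : ℝ) hk]
        field_simp
    _ ≤ 2 ^ (v + 1) * (2 * E) ^ v / w * M * q := by gcongr

lemma tendsto_atTop_of_tendsto_mul_rpow {ι : Type*} {l : Filter ι} {m : ℝ} (hm : 0 < m)
    {q b : ι → ℝ} (hb : ∀ i, 0 ≤ b i) (hq : ∀ᶠ i in l, q i ≤ 1)
    (h : Tendsto (fun i => q i * b i ^ (1 / m)) l atTop) : Tendsto b l atTop := by
  have hroot : Tendsto (fun i => b i ^ (1 / m)) l atTop :=
    tendsto_atTop_mono' l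
      (hq.mono fun i hi => mul_le_of_le_one_left (Real.rpow_nonneg (hb i) _) hi) h
  refine ((tendsto_rpow_atTop hm).comp hroot).congr fun i => ?_
  rw [Function.comp_apply, ← Real.rpow_mul (hb i), one_div, inv_mul_cancel₀ hm.ne', Real.rpow_one]

section MaxDensity

variable {β : Type*} [DecidableEq β]

noncomputable def maxDensity (E : Finset (Sym2 β)) : ℝ :=
  sSup {r : ℝ | ∃ Γ ∈ E.powerset.erase ∅, r = (Γ.card : ℝ) / (edgeVertCount Γ : ℝ)}

lemma edgeVertCount_pos {Γ : Finset (Sym2 β)} (hΓ : Γ.Nonempty) : 0 < edgeVertCount Γ := by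
  obtain ⟨e, he⟩ := hΓ
  have hfin : {v | ∃ e ∈ Γ, v ∈ e}.Finite := (Γ.biUnion Sym2.toFinset).finite_toSet.subset
    fun v ⟨e, he, hv⟩ => mem_biUnion.2 ⟨e, he, Sym2.mem_toFinset.2 hv⟩
  exact (Set.ncard_pos hfin).2 ⟨e.out.1, e, he, Sym2.out_fst_mem e⟩

lemma card_div_edgeVertCount_le_maxDensity {E Γ : Finset (Sym2 β)} (hΓ : Γ ⊆ E)
    (hne : Γ.Nonempty) : (#Γ : ℝ) / edgeVertCount Γ ≤ maxDensity E := by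
  refine le_csSup ?_ ⟨Γ, mem_erase.2 ⟨hne.ne_empty, mem_powerset.2 hΓ⟩, rfl⟩
  refine ((E.powerset.erase ∅).image fun Γ => (#Γ : ℝ) / edgeVertCount Γ).bddAbove.mono ?_
  rintro r ⟨Γ, hΓ, rfl⟩
  exact mem_image_of_mem _ hΓ

lemma card_le_maxDensity_mul {E Γ : Finset (Sym2 β)} (hΓ : Γ ⊆ E) (hne : Γ.Nonempty) :
    (#Γ : ℝ) ≤ maxDensity E * edgeVertCount Γ := by
  have := card_div_edgeVertCount_le_maxDensity hΓ hne
  rwa [div_le_iff₀ (by exact_mod_cast edgeVertCount_pos hne)] at this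

lemma maxDensity_pos {E : Finset (Sym2 β)} (hE : E.Nonempty) : 0 < maxDensity E := by
  obtain ⟨e, he⟩ := hE
  refine lt_of_lt_of_le ?_ (card_div_edgeVertCount_le_maxDensity (singleton_subset_iff.2 he)
    (singleton_nonempty e))
  have := edgeVertCount_pos (singleton_nonempty e)
  rw [card_singleton]
  positivity

end MaxDensity

lemma Sym2.exists_mem_notMem_of_ne {β : Type*} {z w : Sym2 β} (hw : ¬ w.IsDiag) (hne : z ≠ w) :
    ∃ b ∈ w, b ∉ z := by
  induction w using Sym2.ind with
  | _ x y =>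
    by_contra! h
    exact hne ((Sym2.mem_and_mem_iff (by simpa using hw)).1
      ⟨h x (Sym2.mem_mk_left x y), h y (Sym2.mem_mk_right x y)⟩)

def spannedVerts {β : Type*} [DecidableEq β] {P : Sym2 β → Prop} (S : Finset (Subtype P)) :
    Finset β :=
  S.biUnion fun e => (e : Sym2 β).toFinset

lemma card_spannedVerts_le {β : Type*} [DecidableEq β] {P : Sym2 β → Prop}
    (S : Finset (Subtype P)) : #(spannedVerts S) ≤ 2 * #S :=
  calc #(spannedVerts S) ≤ ∑ e ∈ S, #(e : Sym2 β).toFinset := card_biUnion_le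
    _ ≤ ∑ _e ∈ S, 2 := sum_le_sum fun e _ => by rw [Sym2.card_toFinset]; split_ifs <;> omega
    _ = 2 * #S := by rw [sum_const, smul_eq_mul, mul_comm]

lemma card_embedding_forall_mem_le {α β : Type*} [Fintype α] [DecidableEq α] [Fintype β]
    [DecidableEq β] (A : Finset α) (P : Finset β) :
    #{g : α ↪ β | ∀ a ∈ A, g a ∈ P} ≤ #P ^ #A * Fintype.card β ^ (Fintype.card α - #A) :=
  calc #{g : α ↪ β | ∀ a ∈ A, g a ∈ P}
      ≤ #(Fintype.piFinset fun a => if a ∈ A then P else univ) :=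
        card_le_card_of_injOn (fun g => ⇑g) (fun g hg => Fintype.mem_piFinset.2 fun a => by
          simp only [coe_filter, mem_univ, true_and, Set.mem_ofPred_eq] at hg
          split_ifs with ha
          exacts [hg a ha, mem_univ _]) DFunLike.coe_injective.injOn
    _ = #P ^ #A * Fintype.card β ^ (Fintype.card α - #A) := by
        simp only [Fintype.card_piFinset, apply_ite Finset.card, card_univ]
        rw [prod_ite, prod_const, prod_const, filter_univ_mem, filter_not, filter_univ_mem,
          card_univ_sdiff]

section Copies

open scoped Classical

variable {α : Type*} (H : SimpleGraph α) {n : ℕ} {p : ℝ} {d : ℕ} (G : DepRandomGraph n p d)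

def mapEdge (f : α ↪ Fin n) (e : H.edgeSet) : EdgeIdx n :=
  ⟨(e : Sym2 α).map f, by
    rw [Sym2.isDiag_map f.injective]; exact H.not_isDiag_of_mem_edgeSet e.2⟩

lemma mapEdge_injective (f : α ↪ Fin n) : Function.Injective (mapEdge H f) := fun _ _ h =>
  Subtype.ext (Sym2.map.injective f.injective (congrArg Subtype.val h))

lemma edgeVertCount_map_subtype (Γ : Finset H.edgeSet) :
    edgeVertCount (Γ.map (Function.Embedding.subtype _)) = #(spannedVerts Γ) := by
  rw [edgeVertCount, ← Set.ncard_coe_finset]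
  congr 1
  ext a
  simp [spannedVerts]

lemma card_adj_mapEdge_le [Fintype α] {e₁ e₂ : H.edgeSet} (hne : e₁ ≠ e₂) :
    #{f : α ↪ Fin n | G.D.Adj (mapEdge H f e₁) (mapEdge H f e₂)} ≤
      2 * d * n ^ (Fintype.card α - 1) := by
  obtain ⟨w, hw₂, hw₁⟩ := Sym2.exists_mem_notMem_of_ne (H.not_isDiag_of_mem_edgeSet e₂.2)
    (Subtype.coe_injective.ne hne)
  set B : Finset (α ↪ Fin n) := {f | G.D.Adj (mapEdge H f e₁) (mapEdge H f e₂)}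
  let r (f : α ↪ Fin n) : {a // a ≠ w} → Fin n := fun a => f a
  have hr {f g : α ↪ Fin n} (h : r f = r g) : mapEdge H f e₁ = mapEdge H g e₁ :=
    Subtype.ext (Sym2.map_congr fun a ha => congrFun h ⟨a, fun haw => hw₁ (haw ▸ ha)⟩)
  -- within a fibre of `r`, `f` is determined by `f w`, an endpoint of a `D`-neighbour of the
  -- common edge `mapEdge f e₁`
  have hfiber (r₀) (hr₀ : r₀ ∈ B.image r) : #{f ∈ B | r f = r₀} ≤ 2 * d := by
    obtain ⟨f₀, -, rfl⟩ := mem_image.1 hr₀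
    set N := G.D.neighborFinset (mapEdge H f₀ e₁)
    calc #{f ∈ B | r f = r f₀} ≤ #(spannedVerts N) := by
          refine card_le_card_of_injOn (fun f => f w) (fun f hf => ?_) fun f hf g hg hfg => ?_
          · obtain ⟨hfB, hf₀⟩ := mem_filter.1 hf
            refine mem_biUnion.2 ⟨mapEdge H f e₂, ?_, Sym2.mem_toFinset.2
              (Sym2.mem_map.2 ⟨w, hw₂, rfl⟩)⟩
            rw [SimpleGraph.mem_neighborFinset, ← hr hf₀]
            exact (mem_filter.1 hfB).2
          · have hrfg : r f = r g := (mem_filter.1 hf).2.trans (mem_filter.1 hg).2.symm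
            refine DFunLike.coe_injective (funext fun a => ?_)
            by_cases ha : a = w
            · exact ha ▸ hfg
            · exact congrFun hrfg ⟨a, ha⟩
      _ ≤ 2 * #N := card_spannedVerts_le N
      _ ≤ 2 * d := by gcongr; exact G.degree_le _
  calc #B ≤ 2 * d * #(B.image r) := card_le_mul_card_image B _ hfiber
    _ ≤ 2 * d * n ^ (Fintype.card α - 1) := by
        gcongr
        exact (card_le_univ _).trans (by simp [Fintype.card_subtype_compl])

variable [Fintype H.edgeSet]

def edgeImage (f : α ↪ Fin n) : Finset (EdgeIdx n) := univ.image (mapEdge H f)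

lemma card_edgeImage (f : α ↪ Fin n) : #(edgeImage H f) = Fintype.card H.edgeSet := by
  rw [edgeImage, card_image_of_injective _ (mapEdge_injective H f), card_univ]

lemma containsCopy_of_mem_present {f : α ↪ Fin n} {ω : G.Ω}
    (hω : ω ∈ G.present (edgeImage H f)) : ContainsCopy (G.graph ω) H := by
  refine ⟨f, f.injective, fun u v huv => ?_⟩
  have hne : f u ≠ f v := f.injective.ne (H.ne_of_adj huv)
  have := hω (mapEdge H f ⟨s(u, v), huv⟩) (mem_image_of_mem _ (mem_univ _))
  simp only [DepRandomGraph.graph, SimpleGraph.fromEdgeSet_adj, Set.mem_ofPred_eq]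
  exact ⟨⟨by simpa using hne, by simpa [mapEdge] using this⟩, hne⟩

variable [Fintype α]

lemma card_mapEdge_mem_le (S : Finset (EdgeIdx n)) (Γ : Finset H.edgeSet) :
    #{g : α ↪ Fin n | ∀ e ∈ Γ, mapEdge H g e ∈ S} ≤
      (2 * #S) ^ #(spannedVerts Γ) * n ^ (Fintype.card α - #(spannedVerts Γ)) := by
  have hverts (g : α ↪ Fin n) (hg : ∀ e ∈ Γ, mapEdge H g e ∈ S) :
      ∀ a ∈ spannedVerts Γ, g a ∈ spannedVerts S := by
    simp only [spannedVerts, mem_biUnion, Sym2.mem_toFinset]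
    rintro a ⟨e, he, hae⟩
    exact ⟨_, hg e he, Sym2.mem_map.2 ⟨a, hae, rfl⟩⟩
  calc _ ≤ _ := card_le_card (monotone_filter_right _ fun g _ => hverts g)
    _ ≤ _ := card_embedding_forall_mem_le _ _
    _ ≤ _ := by rw [Fintype.card_fin]; gcongr; exact card_spannedVerts_le S

noncomputable def indepCopies : Finset (α ↪ Fin n) :=
  {f | G.D.IsIndepSet (edgeImage H f : Set (EdgeIdx n))}

lemma measure_present_inter_le {f g : α ↪ Fin n} (hf : f ∈ indepCopies H G)
    (hg : g ∈ indepCopies H G) :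
    G.μ (G.present (edgeImage H f) ∩ G.present (edgeImage H g)) ≤
      ENNReal.ofReal p ^ (2 * Fintype.card H.edgeSet -
        #{e | mapEdge H g e ∈ G.D.nbhdClosure (edgeImage H f)}) := by
  set C := G.D.nbhdClosure (edgeImage H f)
  set T := edgeImage H f ∪ (edgeImage H g \ C)
  have hT : G.D.IsIndepSet (T : Set (EdgeIdx n)) :=
    (mem_filter.1 hf).2.union_sdiff_nbhdClosure (mem_filter.1 hg).2
  have hcard : #T = 2 * Fintype.card H.edgeSet - #{e | mapEdge H g e ∈ C} := by
    have hdisj : Disjoint (edgeImage H f) (edgeImage H g \ C) :=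
      disjoint_sdiff.mono_left subset_union_left
    have hout : #(edgeImage H g \ C) + #{e | mapEdge H g e ∈ C} = Fintype.card H.edgeSet := by
      rw [edgeImage, sdiff_eq_filter, filter_image, card_image_of_injective _
        (mapEdge_injective H g), add_comm, card_filter_add_card_filter_not, card_univ]
    rw [card_union_of_disjoint hdisj, card_edgeImage]
    omega
  calc _ ≤ G.μ (G.present T) := measure_mono (by
        rw [← G.present_union]
        exact G.present_anti (union_subset_union subset_rfl sdiff_subset))
    _ = _ := by rw [G.measure_present_of_isIndepSet hT, hcard]

/- The summand for `Γ` bounds the contribution to the second moment, around a fixed independent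
copy `f`, of the copies `g` that map exactly the edges in `Γ` into the dependency closure of `f`. -/
noncomputable def overlapBound (n d : ℕ) (x : ℝ≥0∞) : ℝ≥0∞ :=
  ∑ Γ ∈ (univ : Finset (Finset H.edgeSet)).erase ∅,
    (((2 * (Fintype.card H.edgeSet * (d + 1))) ^ #(spannedVerts Γ) *
      n ^ (Fintype.card α - #(spannedVerts Γ)) : ℕ) : ℝ≥0∞) *
      x ^ (2 * Fintype.card H.edgeSet - #Γ)

lemma sum_measure_present_inter_le {f : α ↪ Fin n} (hf : f ∈ indepCopies H G) :
    ∑ g ∈ indepCopies H G, G.μ (G.present (edgeImage H f) ∩ G.present (edgeImage H g)) ≤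
      #(indepCopies H G) * ENNReal.ofReal p ^ (2 * Fintype.card H.edgeSet) +
        overlapBound H n d (ENNReal.ofReal p) := by
  set E := Fintype.card H.edgeSet
  set x := ENNReal.ofReal p
  set C := G.D.nbhdClosure (edgeImage H f)
  set I := indepCopies H G
  set Q : (α ↪ Fin n) → Finset H.edgeSet := fun g => {e | mapEdge H g e ∈ C}
  have hfiber (Γ : Finset H.edgeSet) :
      #{g ∈ I | Q g = Γ} ≤ (2 * (E * (d + 1))) ^ #(spannedVerts Γ) *
        n ^ (Fintype.card α - #(spannedVerts Γ)) := by
    refine (card_le_card fun g hg => mem_filter.2 ⟨mem_univ g, fun e he => ?_⟩).trans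
      ((card_mapEdge_mem_le H C Γ).trans ?_)
    · obtain ⟨-, hQ⟩ := mem_filter.1 hg
      exact (mem_filter.1 (hQ ▸ he : e ∈ Q g)).2
    · gcongr
      calc #C ≤ #(edgeImage H f) * (d + 1) := G.D.card_nbhdClosure_le G.degree_le _
        _ = E * (d + 1) := by rw [card_edgeImage]
  calc ∑ g ∈ I, G.μ (G.present (edgeImage H f) ∩ G.present (edgeImage H g))
      ≤ ∑ g ∈ I, x ^ (2 * E - #(Q g)) :=
        sum_le_sum fun g hg => measure_present_inter_le H G hf hg
    _ = ∑ Γ, #{g ∈ I | Q g = Γ} * x ^ (2 * E - #Γ) := by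
        rw [← sum_fiberwise' I Q fun Γ => x ^ (2 * E - #Γ)]
        simp only [sum_const, nsmul_eq_mul]
    _ = #{g ∈ I | Q g = ∅} * x ^ (2 * E) +
          ∑ Γ ∈ univ.erase ∅, #{g ∈ I | Q g = Γ} * x ^ (2 * E - #Γ) := by
        rw [← add_sum_erase _ _ (mem_univ ∅), card_empty, Nat.sub_zero]
    _ ≤ #I * x ^ (2 * E) + overlapBound H n d x := by
        gcongr
        · exact filter_subset _ _
        · exact sum_le_sum fun Γ _ => by gcongr; exact_mod_cast hfiber Γ

lemma card_compl_indepCopies_le :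
    #(indepCopies H G)ᶜ ≤ Fintype.card H.edgeSet ^ 2 * (2 * d * n ^ (Fintype.card α - 1)) := by
  set bad := fun q : H.edgeSet × H.edgeSet =>
    ({f | G.D.Adj (mapEdge H f q.1) (mapEdge H f q.2)} : Finset (α ↪ Fin n))
  have hsub : (indepCopies H G)ᶜ ⊆ (univ : Finset H.edgeSet).offDiag.biUnion bad := by
    intro f hf
    simp only [indepCopies, compl_filter, mem_filter, mem_univ, true_and,
      SimpleGraph.isIndepSet_iff, Set.Pairwise, not_forall, not_not, edgeImage, coe_image,
      coe_univ, Set.image_univ, Set.mem_range] at hf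
    obtain ⟨-, ⟨e₁, rfl⟩, -, ⟨e₂, rfl⟩, hne, hadj⟩ := hf
    exact mem_biUnion.2 ⟨(e₁, e₂), by simpa using fun h : e₁ = e₂ => hne (h ▸ rfl),
      by simpa [bad] using hadj⟩
  calc #(indepCopies H G)ᶜ ≤ ∑ q ∈ (univ : Finset H.edgeSet).offDiag, #(bad q) :=
        (card_le_card hsub).trans card_biUnion_le
    _ ≤ ∑ _q ∈ (univ : Finset H.edgeSet).offDiag, 2 * d * n ^ (Fintype.card α - 1) :=
        sum_le_sum fun q hq => card_adj_mapEdge_le H G (mem_offDiag.1 hq).2.2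
    _ ≤ Fintype.card H.edgeSet ^ 2 * (2 * d * n ^ (Fintype.card α - 1)) := by
        rw [sum_const, smul_eq_mul, offDiag_card, card_univ, sq]
        gcongr
        exact Nat.sub_le _ _

lemma pow_le_two_pow_mul_card_indepCopies [Nonempty α] (hv : 2 * Fintype.card α ≤ n)
    (hd : 2 ^ (Fintype.card α + 2) * Fintype.card H.edgeSet ^ 2 * d ≤ n) :
    n ^ Fintype.card α ≤ 2 ^ (Fintype.card α + 1) * #(indepCopies H G) := by
  set v := Fintype.card α
  set M := #(indepCopies H G)
  have hv1 : 1 ≤ v := Fintype.card_pos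
  have hemb : M + #(indepCopies H G)ᶜ = n.descFactorial v := by
    rw [card_add_card_compl]
    exact Fintype.card_embedding_eq.trans (by rw [Fintype.card_fin])
  have hdesc : n ^ v ≤ 2 ^ v * n.descFactorial v :=
    calc n ^ v ≤ (2 * (n + 1 - v)) ^ v := Nat.pow_le_pow_left (by omega) v
      _ = 2 ^ v * (n + 1 - v) ^ v := mul_pow ..
      _ ≤ _ := Nat.mul_le_mul_left _ (Nat.pow_sub_le_descFactorial n v)
  have hbad : 2 ^ (v + 1) * #(indepCopies H G)ᶜ ≤ n ^ v :=
    calc 2 ^ (v + 1) * #(indepCopies H G)ᶜ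
        ≤ 2 ^ (v + 1) * (Fintype.card H.edgeSet ^ 2 * (2 * d * n ^ (v - 1))) := by
          gcongr; exact card_compl_indepCopies_le H G
      _ = 2 ^ (v + 2) * Fintype.card H.edgeSet ^ 2 * d * n ^ (v - 1) := by ring
      _ ≤ n * n ^ (v - 1) := by gcongr
      _ = n ^ v := by rw [← pow_succ']; congr 1; omega
  have htotal : 2 * n ^ v ≤ 2 ^ (v + 1) * M + 2 ^ (v + 1) * #(indepCopies H G)ᶜ := by
    rw [← mul_add, hemb, pow_succ, mul_comm _ 2, mul_assoc]
    exact Nat.mul_le_mul_left 2 hdesc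
  omega

lemma one_sub_le_measure_containsCopy_of_overlapBound_le (hI : (indepCopies H G).Nonempty)
    (hp : 0 < p) {δ : ℝ≥0∞}
    (h : overlapBound H n d (ENNReal.ofReal p) ≤
      δ * (#(indepCopies H G) * ENNReal.ofReal p ^ (2 * Fintype.card H.edgeSet))) :
    1 - δ ≤ G.μ {ω | ContainsCopy (G.graph ω) H} := by
  set I := indepCopies H G
  set x := ENNReal.ofReal p
  have hfirst : ∑ f ∈ I, G.μ (G.present (edgeImage H f)) = #I * x ^ Fintype.card H.edgeSet := by
    rw [sum_congr rfl fun f hf => by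
      rw [G.measure_present_of_isIndepSet (mem_filter.1 hf).2, card_edgeImage], sum_const,
      nsmul_eq_mul]
  have hU : ⋃ f ∈ I, G.present (edgeImage H f) ⊆ {ω | ContainsCopy (G.graph ω) H} :=
    Set.iUnion₂_subset fun f _ _ hω => containsCopy_of_mem_present H G hω
  refine le_trans ?_ (measure_mono hU)
  refine one_sub_le_measure_biUnion I (fun f _ => G.measurableSet_present _) ?_ ?_
  · rw [hfirst]
    exact mul_ne_zero (by simpa using hI.ne_empty) (pow_ne_zero _ (ENNReal.ofReal_pos.2 hp).ne')
  · rw [hfirst]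
    calc ∑ f ∈ I, ∑ g ∈ I, G.μ (G.present (edgeImage H f) ∩ G.present (edgeImage H g))
        ≤ ∑ _f ∈ I, (#I * x ^ (2 * Fintype.card H.edgeSet) +
            δ * (#I * x ^ (2 * Fintype.card H.edgeSet))) :=
          sum_le_sum fun f hf => (sum_measure_present_inter_le H G hf).trans (by gcongr)
      _ = (1 + δ) * (#I * x ^ Fintype.card H.edgeSet) ^ 2 := by
          rw [sum_const, nsmul_eq_mul]; ring

variable [Nonempty H.edgeSet]

lemma overlapBound_le {m M : ℝ} (hm : 0 < m) (hp : 0 < p)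
    (hdens : ∀ Γ ⊆ H.edgeFinset, Γ.Nonempty → (#Γ : ℝ) ≤ m * edgeVertCount Γ)
    (hn : 0 < n) (hb : 1 ≤ (n : ℝ) / (d + 1)) (hw : 1 ≤ p * ((n : ℝ) / (d + 1)) ^ (1 / m))
    (hM : (n : ℝ) ^ Fintype.card α / 2 ^ (Fintype.card α + 1) ≤ M) :
    overlapBound H n d (ENNReal.ofReal p) ≤
      ENNReal.ofReal (2 ^ Fintype.card H.edgeSet *
          (2 ^ (Fintype.card α + 1) * (2 * Fintype.card H.edgeSet) ^ Fintype.card α) /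
        (p * ((n : ℝ) / (d + 1)) ^ (1 / m))) *
      (ENNReal.ofReal M * ENNReal.ofReal p ^ (2 * Fintype.card H.edgeSet)) := by
  set E := Fintype.card H.edgeSet
  set v := Fintype.card α
  set w := p * ((n : ℝ) / (d + 1)) ^ (1 / m)
  set c : ℝ := 2 ^ (v + 1) * (2 * E) ^ v
  have hE : 1 ≤ E := Fintype.card_pos
  have hM0 : 0 ≤ M := le_trans (by positivity) hM
  have hterm (Γ : Finset H.edgeSet) (hΓ : Γ ∈ univ.erase ∅) :
      (((2 * (E * (d + 1))) ^ #(spannedVerts Γ) * n ^ (v - #(spannedVerts Γ)) : ℕ) : ℝ≥0∞) *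
        ENNReal.ofReal p ^ (2 * E - #Γ) ≤
      ENNReal.ofReal (c / w) * (ENNReal.ofReal M * ENNReal.ofReal p ^ (2 * E)) := by
    have hne : Γ.Nonempty := nonempty_iff_ne_empty.2 (ne_of_mem_erase hΓ)
    have hdensΓ := hdens (Γ.map (Function.Embedding.subtype _))
      (fun e he => by obtain ⟨e, -, rfl⟩ := mem_map.1 he; simp) (hne.map)
    rw [card_map, edgeVertCount_map_subtype] at hdensΓ
    have hreal := natCast_le_mul_pow hn rfl hE (card_le_univ (spannedVerts Γ)) (by linarith) hM
      (div_pow_le_pow_of_le_mul hm hb hw rfl (card_pos.2 hne) hdensΓ)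
    have hΓE : #Γ ≤ E := card_le_univ Γ
    calc _ ≤ ENNReal.ofReal (c / w * M * p ^ #Γ) * ENNReal.ofReal p ^ (2 * E - #Γ) := by
          gcongr
          rw [← ENNReal.ofReal_natCast]
          exact ENNReal.ofReal_le_ofReal hreal
      _ = _ := by
          rw [ENNReal.ofReal_mul (by positivity), ENNReal.ofReal_mul (by positivity),
            ENNReal.ofReal_pow hp.le, mul_assoc, mul_assoc, ← pow_add,
            Nat.add_sub_cancel' (by omega)]
  calc overlapBound H n d (ENNReal.ofReal p)
      ≤ ∑ _Γ ∈ (univ : Finset (Finset H.edgeSet)).erase ∅,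
          ENNReal.ofReal (c / w) * (ENNReal.ofReal M * ENNReal.ofReal p ^ (2 * E)) :=
        sum_le_sum hterm
    _ ≤ (2 ^ E : ℕ) *
          (ENNReal.ofReal (c / w) * (ENNReal.ofReal M * ENNReal.ofReal p ^ (2 * E))) := by
        rw [sum_const, nsmul_eq_mul]
        gcongr
        exact card_erase_le.trans (by rw [card_univ, Fintype.card_finset])
    _ = _ := by
        rw [← mul_assoc, ← ENNReal.ofReal_natCast, ← ENNReal.ofReal_mul (by positivity),
          Nat.cast_pow, Nat.cast_ofNat, ← mul_div_assoc]

lemma pow_div_le_card_indepCopies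
    (hb : 2 ^ (Fintype.card α + 2) * (Fintype.card H.edgeSet : ℝ) ^ 2 ≤ (n : ℝ) / (d + 1)) :
    (n : ℝ) ^ Fintype.card α / 2 ^ (Fintype.card α + 1) ≤ #(indepCopies H G) := by
  set E := Fintype.card H.edgeSet
  set v := Fintype.card α
  have : Nonempty α := ⟨(Classical.arbitrary H.edgeSet).1.out.1⟩
  have hd : (0 : ℝ) < d + 1 := by positivity
  have hbn : 2 ^ (v + 2) * (E : ℝ) ^ 2 * (d + 1) ≤ n := (le_div_iff₀ hd).1 hb
  have hv : 2 * v ≤ 2 ^ (v + 2) * E ^ 2 := by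
    have := Nat.lt_two_pow_self (n := v)
    have : 1 ≤ E ^ 2 := Nat.one_le_pow _ _ Fintype.card_pos
    calc 2 * v ≤ 2 ^ (v + 2) * 1 := by rw [pow_succ, pow_succ]; omega
      _ ≤ 2 ^ (v + 2) * E ^ 2 := by gcongr
  have hnv : 2 * v ≤ n := by
    refine hv.trans ?_
    exact_mod_cast le_trans (le_mul_of_one_le_right (by positivity) (by linarith)) hbn
  have hnd : 2 ^ (v + 2) * E ^ 2 * d ≤ n := by
    have : 2 ^ (v + 2) * (E : ℝ) ^ 2 * d ≤ n := le_trans (by gcongr; linarith) hbn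
    exact_mod_cast this
  rw [div_le_iff₀ (by positivity), mul_comm]
  exact_mod_cast pow_le_two_pow_mul_card_indepCopies H G hnv hnd

theorem one_sub_le_measure_containsCopy {m : ℝ} (hm : 0 < m)
    (hdens : ∀ Γ ⊆ H.edgeFinset, Γ.Nonempty → (#Γ : ℝ) ≤ m * edgeVertCount Γ)
    (hb : 2 ^ (Fintype.card α + 2) * (Fintype.card H.edgeSet : ℝ) ^ 2 ≤ (n : ℝ) / (d + 1))
    (hw : 1 ≤ p * ((n : ℝ) / (d + 1)) ^ (1 / m)) :
    1 - ENNReal.ofReal (2 ^ Fintype.card H.edgeSet *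
          (2 ^ (Fintype.card α + 1) * (2 * Fintype.card H.edgeSet) ^ Fintype.card α) /
        (p * ((n : ℝ) / (d + 1)) ^ (1 / m))) ≤ G.μ {ω | ContainsCopy (G.graph ω) H} := by
  have hb1 : 1 ≤ (n : ℝ) / (d + 1) := le_trans (one_le_mul_of_one_le_of_one_le
    (one_le_pow₀ one_le_two) (one_le_pow₀ (by exact_mod_cast Fintype.card_pos))) hb
  have hn : 0 < n := by
    rcases Nat.eq_zero_or_pos n with rfl | hn
    · norm_num at hb1
    · exact hn
  have hM := pow_div_le_card_indepCopies H G hb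
  have hI : (indepCopies H G).Nonempty := card_pos.1 (by exact_mod_cast
    (lt_of_lt_of_le (by positivity) hM : (0 : ℝ) < #(indepCopies H G)))
  have hp : 0 < p :=
    pos_of_mul_pos_left (b := ((n : ℝ) / (d + 1)) ^ (1 / m)) (by linarith) (by positivity)
  refine one_sub_le_measure_containsCopy_of_overlapBound_le H G hI hp ?_
  simpa only [ENNReal.ofReal_natCast] using overlapBound_le H hm hp hdens hn hb1 hw hM

end Copies

theorem subgraph_containment_threshold_general
    {α : Type} [Fintype α] [DecidableEq α] (H : SimpleGraph α) [Fintype H.edgeSet]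
    (hE : H.edgeFinset.Nonempty)
    (mH : ℝ)
    (hmH : mH = sSup {r : ℝ | ∃ Γ ∈ H.edgeFinset.powerset.erase ∅,
        r = (Γ.card : ℝ) / (edgeVertCount Γ : ℝ)})
    (p : ℕ → ℝ) (d : ℕ → ℕ)
    (hthr : Tendsto (fun n : ℕ => p n * ((n : ℝ) / ((d n : ℝ) + 1)) ^ (1 / mH)) atTop atTop)
    (G : (n : ℕ) → DepRandomGraph n (p n) (d n)) :
    Tendsto (fun n : ℕ => (G n).μ {ω | ContainsCopy ((G n).graph ω) H}) atTop (nhds 1) := by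
  change mH = maxDensity H.edgeFinset at hmH
  subst hmH
  have : Nonempty H.edgeSet := by
    obtain ⟨e, he⟩ := hE
    exact ⟨⟨e, SimpleGraph.mem_edgeFinset.1 he⟩⟩
  have hm := maxDensity_pos hE
  have hb : Tendsto (fun n : ℕ => (n : ℝ) / (d n + 1)) atTop atTop :=
    tendsto_atTop_of_tendsto_mul_rpow hm (fun n => div_nonneg n.cast_nonneg (by positivity))
      ((eventually_ge_atTop 2).mono fun n hn => (G n).p_le_one hn) hthr
  set C : ℝ := 2 ^ Fintype.card H.edgeSet *
    (2 ^ (Fintype.card α + 1) * (2 * Fintype.card H.edgeSet) ^ Fintype.card α)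
  have hlower : Tendsto (fun n : ℕ => 1 - ENNReal.ofReal
      (C / (p n * ((n : ℝ) / (d n + 1)) ^ (1 / maxDensity H.edgeFinset)))) atTop (nhds 1) := by
    simpa using ENNReal.Tendsto.sub tendsto_const_nhds
      (ENNReal.tendsto_ofReal (tendsto_const_nhds.div_atTop hthr)) (Or.inl ENNReal.one_ne_top)
  refine tendsto_of_tendsto_of_tendsto_of_le_of_le' hlower tendsto_const_nhds ?_
    (Eventually.of_forall fun n => prob_le_one)
  filter_upwards [hb.eventually_ge_atTop (2 ^ (Fintype.card α + 2) * Fintype.card H.edgeSet ^ 2),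
    hthr.eventually_ge_atTop 1] with n hbn hwn
  exact one_sub_le_measure_containsCopy H (G n) hm (fun Γ hΓ hne => card_le_maxDensity_mul hΓ hne)
    hbn hwn

/-- **Subgraph containment threshold.** Let `H` be a fixed finite graph with at least one edge
and no isolated vertices, and let `m(H) = max_{∅ ≠ Γ ⊆ E(H)} |E(Γ)|/|V(Γ)|`.  If
`p(n) (n/(d(n)+1))^{1/m(H)} → ∞`, then any sequence of `d(n)`-dependent random graph
distributions almost surely contains a copy of `H`. -/
theorem subgraph_containment_threshold
    {α : Type} [Fintype α] [DecidableEq α] (H : SimpleGraph α) [Fintype H.edgeSet]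
    (hE : H.edgeFinset.Nonempty) (hiso : ∀ v : α, ∃ u : α, H.Adj v u)
    (mH : ℝ)
    (hmH : mH = sSup {r : ℝ | ∃ Γ ∈ H.edgeFinset.powerset.erase ∅,
        r = (Γ.card : ℝ) / (edgeVertCount Γ : ℝ)})
    (p : ℕ → ℝ) (d : ℕ → ℕ)
    (hthr : Tendsto (fun n : ℕ => p n * ((n : ℝ) / ((d n : ℝ) + 1)) ^ (1 / mH)) atTop atTop)
    (G : (n : ℕ) → DepRandomGraph n (p n) (d n)) :
    Tendsto (fun n : ℕ => (G n).μ {ω | ContainsCopy ((G n).graph ω) H}) atTop (nhds 1) :=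
  subgraph_containment_threshold_general H hE mH hmH p d hthr G
end

section
/- Let G ~ G_{n,p,d} be any d-dependent random graph distribution and let F be any set of m ≥ 1 unordered pairs of distinct vertices. Then the probability that none of the pairs in F is a present edge is at most (1−p)^{⌈m/(d+1)⌉}. -/
open MeasureTheory ProbabilityTheory Filter

/-- Greedy independent set: a graph with max degree ≤ d contains, inside any finite set `F`,
an independent set `S` with `F.card ≤ S.card * (d+1)`. -/
lemma exists_greedy_indep {V : Type*} [Fintype V] [DecidableEq V] (D : SimpleGraph V) {d : ℕ}
    (hd : ∀ e, (D.neighborSet e).ncard ≤ d) (F : Finset V) :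
    ∃ S ⊆ F, (∀ a ∈ S, ∀ b ∈ S, a ≠ b → ¬ D.Adj a b) ∧ F.card ≤ S.card * (d + 1) := by
  classical
  induction F using Finset.strongInductionOn with
  | _ F ih =>
    rcases F.eq_empty_or_nonempty with rfl | ⟨e, he⟩
    · exact ⟨∅, Finset.Subset.refl _, by simp, by simp⟩
    · have hNfin : (D.neighborSet e).Finite := Set.toFinite _
      set N := hNfin.toFinset with hN
      have hNcard : N.card ≤ d := by
        rw [hN, ← Set.ncard_eq_toFinset_card _ hNfin]
        exact hd e
      set F' := F \ insert e N with hF'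
      have heF' : e ∉ F' := by simp [hF']
      have hss : F' ⊂ F :=
        (Finset.ssubset_iff_of_subset Finset.sdiff_subset).mpr ⟨e, he, heF'⟩
      obtain ⟨S, hSsub, hSind, hScard⟩ := ih F' hss
      have key : ∀ x ∈ S, ¬ D.Adj e x := by
        intro x hx hadj
        have hmem := (Finset.mem_sdiff.mp (hSsub hx)).2
        exact hmem (Finset.mem_insert_of_mem (by
          rw [hN, Set.Finite.mem_toFinset]; exact hadj))
      refine ⟨insert e S, ?_, ?_, ?_⟩
      · intro x hx
        rcases Finset.mem_insert.mp hx with rfl | hx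
        · exact he
        · exact (Finset.mem_sdiff.mp (hSsub hx)).1
      · intro a ha b hb hab
        rcases Finset.mem_insert.mp ha with ha' | ha'
        · rcases Finset.mem_insert.mp hb with hb' | hb'
          · exact absurd (ha'.trans hb'.symm) hab
          · exact ha' ▸ key b hb'
        · rcases Finset.mem_insert.mp hb with hb' | hb'
          · subst hb'; exact fun h => key a ha' h.symm
          · exact hSind a ha' b hb' hab
      · have heS : e ∉ S := fun h => heF' (hSsub h)
        rw [Finset.card_insert_of_notMem heS]
        have h1 : F.card ≤ F'.card + (insert e N).card := by
          have hsub : F ⊆ F' ∪ insert e N := by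
            intro x hx
            by_cases hxe : x ∈ insert e N
            · exact Finset.mem_union_right _ hxe
            · exact Finset.mem_union_left _ (Finset.mem_sdiff.mpr ⟨hx, hxe⟩)
          calc F.card ≤ (F' ∪ insert e N).card := Finset.card_le_card hsub
            _ ≤ F'.card + (insert e N).card := Finset.card_union_le _ _
        have h2 : (insert e N).card ≤ d + 1 := by
          calc (insert e N).card ≤ N.card + 1 := Finset.card_insert_le _ _
            _ ≤ d + 1 := by omega
        calc F.card ≤ F'.card + (d + 1) := by omega
          _ ≤ S.card * (d + 1) + (d + 1) := by omega
          _ = (S.card + 1) * (d + 1) := by ring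

/-- For an independent set `S` in the dependency graph, the events `X e = false` are jointly
independent and hence the probability of their intersection is the product. -/
lemma meas_all_false {n : ℕ} {p : ℝ} {d : ℕ} (G : DepRandomGraph n p d)
    (S : Finset (EdgeIdx n)) (hS : ∀ a ∈ S, ∀ b ∈ S, a ≠ b → ¬ G.D.Adj a b) :
    G.μ {ω | ∀ e ∈ S, G.X e ω = false} = (1 - ENNReal.ofReal p) ^ S.card := by
  classical
  induction S using Finset.induction with
  | empty => simp
  | @insert e T heT ih =>
    have hS' : ∀ a ∈ T, ∀ b ∈ T, a ≠ b → ¬ G.D.Adj a b := fun a ha b hb =>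
      hS a (Finset.mem_insert_of_mem ha) b (Finset.mem_insert_of_mem hb)
    have hsplit : {ω | ∀ f ∈ insert e T, G.X f ω = false} =
        {ω | G.X e ω = false} ∩ {ω | ∀ f ∈ T, G.X f ω = false} := by
      ext ω; simp [Set.mem_inter_iff]
    have hmeas1 : MeasurableSet[MeasurableSpace.comap (G.X e) ⊤] {ω | G.X e ω = false} :=
      ⟨{false}, trivial, rfl⟩
    have hmeas2 : MeasurableSet[⨆ f ∈ {f : EdgeIdx n | f ≠ e ∧ ¬ G.D.Adj e f},
        MeasurableSpace.comap (G.X f) ⊤] {ω | ∀ f ∈ T, G.X f ω = false} := by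
      have : {ω | ∀ f ∈ T, G.X f ω = false} = ⋂ f ∈ T, {ω | G.X f ω = false} := by
        ext ω; simp
      rw [this]
      refine MeasurableSet.biInter T.countable_toSet fun f hf => ?_
      have hne : f ≠ e := fun h => heT (h ▸ hf)
      have hmem : f ∈ {f : EdgeIdx n | f ≠ e ∧ ¬ G.D.Adj e f} :=
        ⟨hne, hS e (Finset.mem_insert_self e T) f (Finset.mem_insert_of_mem hf) hne.symm⟩
      have hle : MeasurableSpace.comap (G.X f) ⊤ ≤
          ⨆ g ∈ {f : EdgeIdx n | f ≠ e ∧ ¬ G.D.Adj e f}, MeasurableSpace.comap (G.X g) ⊤ :=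
        le_biSup (fun g => MeasurableSpace.comap (G.X g) ⊤) hmem
      exact hle _ ⟨{false}, trivial, rfl⟩
    have hindep := (Indep_iff _ _ _).mp (G.indep e) _ _ hmeas1 hmeas2
    have hXe : G.μ {ω | G.X e ω = false} = 1 - ENNReal.ofReal p := by
      have hc : {ω | G.X e ω = false} = (G.X e ⁻¹' {true})ᶜ := by
        ext ω; simp
      have hms : MeasurableSet (G.X e ⁻¹' {true}) :=
        G.meas e MeasurableSpace.measurableSet_top
      have hpre : G.X e ⁻¹' {true} = {ω | G.X e ω = true} := rfl
      rw [hc, measure_compl hms (measure_ne_top _ _), hpre, G.probX e, measure_univ]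
    rw [hsplit, hindep, hXe, ih hS', Finset.card_insert_of_notMem heT, pow_succ]
    ring
  
/-- **Absence of many edges.** For any `d`-dependent random graph distribution and any set `F`
of `m ≥ 1` potential edges, the probability that none of the pairs in `F` is present is at most
`(1−p)^⌈m/(d+1)⌉`. -/
theorem none_present_bound {n : ℕ} {p : ℝ} {d : ℕ} (G : DepRandomGraph n p d)
    (F : Finset (EdgeIdx n)) (m : ℕ) (hm : 1 ≤ m) (hF : F.card = m) :
    G.μ {ω | ∀ e ∈ F, G.X e ω = false} ≤
      ENNReal.ofReal ((1 - p) ^ ⌈(m : ℝ) / ((d : ℝ) + 1)⌉₊) := by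
  classical
  obtain ⟨S, hSsub, hSind, hScard⟩ := exists_greedy_indep G.D G.degBound F
  -- p ≤ 1
  have hFne : F.Nonempty := Finset.card_pos.mp (hF ▸ hm)
  obtain ⟨e₀, he₀⟩ := hFne
  have hp1 : p ≤ 1 := by
    have h2 : G.μ {ω | G.X e₀ ω = true} ≤ 1 := prob_le_one
    rw [G.probX e₀] at h2
    exact ENNReal.ofReal_le_one.mp h2
  have h1p : 0 ≤ 1 - p := by linarith
  -- monotonicity
  have hmono : G.μ {ω | ∀ e ∈ F, G.X e ω = false} ≤ G.μ {ω | ∀ e ∈ S, G.X e ω = false} :=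
    measure_mono fun ω hω e he => hω e (hSsub he)
  -- ceiling bound
  have hceil : ⌈(m : ℝ) / ((d : ℝ) + 1)⌉₊ ≤ S.card := by
    rw [Nat.ceil_le, div_le_iff₀ (by positivity)]
    have : (m : ℝ) ≤ (S.card * (d + 1) : ℕ) := by
      exact_mod_cast hF ▸ hScard
    push_cast at this ⊢
    linarith
  calc G.μ {ω | ∀ e ∈ F, G.X e ω = false}
      ≤ (1 - ENNReal.ofReal p) ^ S.card := hmono.trans_eq (meas_all_false G S hSind)
    _ ≤ (1 - ENNReal.ofReal p) ^ ⌈(m : ℝ) / ((d : ℝ) + 1)⌉₊ := by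
        exact pow_le_pow_right_of_le_one' tsub_le_self hceil
    _ ≤ (ENNReal.ofReal (1 - p)) ^ ⌈(m : ℝ) / ((d : ℝ) + 1)⌉₊ := by
        refine pow_le_pow_left' ?_ _
        by_cases hp0 : 0 ≤ p
        · rw [← ENNReal.ofReal_one, ← ENNReal.ofReal_sub _ hp0]
        · push_neg at hp0
          rw [ENNReal.ofReal_of_nonpos hp0.le, tsub_zero]
          exact ENNReal.one_le_ofReal.mpr (by linarith)
    _ = ENNReal.ofReal ((1 - p) ^ ⌈(m : ℝ) / ((d : ℝ) + 1)⌉₊) :=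
        (ENNReal.ofReal_pow h1p _).symm
end

section
/- Let G ~ G_{n,p,d} be any d-dependent random graph distribution and let F be any set of m ≥ 1 unordered pairs of distinct vertices. Then the probability that every pair in F is a present edge is at most p^{⌈m/(d+1)⌉}. -/
/-!
Among the edges of `F`, greedily pick an edge and discard its at most `d` neighbours in the
dependency graph; this yields a set `S ⊆ F` of at least `m / (d + 1)` pairwise non-adjacent
edges. Each `X e` with `e ∈ S` is independent of the variables indexed by the rest of `S`, so the
events `X e = true`, `e ∈ S`, are mutually independent and all of them occur with probability
`p ^ |S|`.
-/

open MeasureTheory ProbabilityTheory Filter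

open Finset

namespace SimpleGraph

variable {V : Type*} (G : SimpleGraph V)

theorem card_filter_adj_le_ncard_neighborSet [Finite V] [DecidableRel G.Adj] (s : Finset V)
    (v : V) : #{w ∈ s | G.Adj v w} ≤ (G.neighborSet v).ncard := by
  rw [← Set.ncard_coe_finset]
  exact Set.ncard_le_ncard (fun w hw => (mem_filter.1 hw).2) (Set.toFinite _)

theorem exists_isIndepSet_subset_card_le_mul [DecidableEq V] [DecidableRel G.Adj] {d : ℕ}
    (s : Finset V) (hdeg : ∀ v ∈ s, #{w ∈ s | G.Adj v w} ≤ d) :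
    ∃ t ⊆ s, G.IsIndepSet (t : Set V) ∧ #s ≤ (d + 1) * #t := by
  induction s using Finset.strongInduction with
  | H s ih =>
    obtain rfl | ⟨v, hv⟩ := s.eq_empty_or_nonempty
    · exact ⟨∅, empty_subset _, by simp⟩
    set rest := {w ∈ s | w ≠ v ∧ ¬G.Adj v w}
    have hrest_ssub : rest ⊂ s := filter_ssubset.2 ⟨v, hv, by simp⟩
    have hcover : s ⊆ rest ∪ insert v {w ∈ s | G.Adj v w} := by
      intro w hw
      by_cases hwv : w = v
      · simp [hwv]
      by_cases hvw : G.Adj v w <;> simp [rest, hw, hwv, hvw]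
    have hcard : #s ≤ #rest + (d + 1) := calc
      #s ≤ #rest + #(insert v {w ∈ s | G.Adj v w}) :=
        (card_le_card hcover).trans (card_union_le _ _)
      _ ≤ #rest + (d + 1) := by grw [card_insert_le, hdeg v hv]
    obtain ⟨t, hts, ht, hrest⟩ := ih rest hrest_ssub fun w hw =>
      (card_le_card (filter_subset_filter _ hrest_ssub.subset)).trans
        (hdeg w (hrest_ssub.subset hw))
    have hvt : v ∉ t := fun h => (mem_filter.1 (hts h)).2.1 rfl
    refine ⟨insert v t, insert_subset hv (hts.trans hrest_ssub.subset), ?_, ?_⟩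
    · rw [coe_insert]
      refine Set.pairwise_insert.2 ⟨ht, fun w hw _ => ?_⟩
      have hvw := (mem_filter.1 (hts hw)).2.2
      exact ⟨hvw, fun hwv => hvw hwv.symm⟩
    · rw [card_insert_of_notMem hvt]
      linarith

end SimpleGraph

theorem ENNReal.ofReal_pow_le (x : ℝ) (k : ℕ) : ENNReal.ofReal x ^ k ≤ ENNReal.ofReal (x ^ k) := by
  rcases le_or_gt 0 x with hx | hx
  · rw [ENNReal.ofReal_pow hx]
  rcases k.eq_zero_or_pos with rfl | hk
  · simp
  rw [ENNReal.ofReal_of_nonpos hx.le, zero_pow hk.ne']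
  exact zero_le

namespace DepRandomGraph

variable {n : ℕ} {p : ℝ} {d : ℕ} (G : DepRandomGraph n p d)

theorem measurableSet_forall_mem_of_forall_not_adj {e : EdgeIdx n} {S : Finset (EdgeIdx n)}
    (he : e ∉ S) (hS : ∀ f ∈ S, ¬G.D.Adj e f) :
    MeasurableSet[⨆ f ∈ {f : EdgeIdx n | f ≠ e ∧ ¬G.D.Adj e f}, MeasurableSpace.comap (G.X f) ⊤]
      {ω | ∀ f ∈ S, G.X f ω = true} := by
  simp only [Set.ofPred_forall]
  refine MeasurableSet.iInter fun f => MeasurableSet.iInter fun hf => ?_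
  have hle := le_iSup₂ (f := fun f (_ : f ∈ {f : EdgeIdx n | f ≠ e ∧ ¬G.D.Adj e f}) =>
    MeasurableSpace.comap (G.X f) ⊤) f ⟨ne_of_mem_of_not_mem hf he, hS f hf⟩
  exact hle _ ⟨{true}, trivial, rfl⟩

theorem measure_forall_mem_eq_pow {S : Finset (EdgeIdx n)}
    (hS : G.D.IsIndepSet (S : Set (EdgeIdx n))) :
    G.μ {ω | ∀ e ∈ S, G.X e ω = true} = ENNReal.ofReal p ^ #S := by
  induction S using Finset.induction_on with
  | empty => simp
  | insert e S he ih =>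
    rw [coe_insert, SimpleGraph.IsIndepSet, Set.pairwise_insert] at hS
    have hsplit : {ω | ∀ f ∈ insert e S, G.X f ω = true}
        = G.X e ⁻¹' {true} ∩ {ω | ∀ f ∈ S, G.X f ω = true} := by
      ext ω
      simp
    have hindep := (Indep_iff _ _ _).1 (G.indep e) _ _ ⟨{true}, trivial, rfl⟩
      (G.measurableSet_forall_mem_of_forall_not_adj he fun f hf =>
        (hS.2 f hf (ne_of_mem_of_not_mem hf he).symm).1)
    rw [hsplit, hindep, ih hS.1, card_insert_of_notMem he, pow_succ']
    exact congrArg (· * _) (G.probX e)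

end DepRandomGraph

theorem all_present_bound_general {n : ℕ} {p : ℝ} {d : ℕ} (G : DepRandomGraph n p d)
    (F : Finset (EdgeIdx n)) (m : ℕ) (hF : F.card = m) :
    G.μ {ω | ∀ e ∈ F, G.X e ω = true} ≤
      ENNReal.ofReal (p ^ ⌈(m : ℝ) / ((d : ℝ) + 1)⌉₊) := by
  classical
  obtain ⟨S, hSF, hS, hFS⟩ := G.D.exists_isIndepSet_subset_card_le_mul F fun e _ =>
    (G.D.card_filter_adj_le_ncard_neighborSet F e).trans (G.degBound e)
  set k := ⌈(m : ℝ) / ((d : ℝ) + 1)⌉₊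
  have hk : k ≤ #S := by
    rw [Nat.ceil_le, div_le_iff₀ (by positivity), ← hF]
    exact_mod_cast hFS.trans_eq (mul_comm _ _)
  -- shrinking `S` to exactly `k` edges spares us from having to know `p ≤ 1`
  obtain ⟨T, hTS, hTk⟩ := exists_subset_card_eq hk
  rw [← hTk]
  calc G.μ {ω | ∀ e ∈ F, G.X e ω = true}
      ≤ G.μ {ω | ∀ e ∈ T, G.X e ω = true} := measure_mono fun ω h e he => h e (hSF (hTS he))
    _ = ENNReal.ofReal p ^ #T := G.measure_forall_mem_eq_pow (hS.mono hTS)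
    _ ≤ ENNReal.ofReal (p ^ #T) := ENNReal.ofReal_pow_le p _

/-- **Presence of many edges.** For any `d`-dependent random graph distribution and any set `F`
of `m ≥ 1` potential edges, the probability that every pair in `F` is present is at most
`p^⌈m/(d+1)⌉`. -/
theorem all_present_bound {n : ℕ} {p : ℝ} {d : ℕ} (G : DepRandomGraph n p d)
    (F : Finset (EdgeIdx n)) (m : ℕ) (hm : 1 ≤ m) (hF : F.card = m) :
    G.μ {ω | ∀ e ∈ F, G.X e ω = true} ≤
      ENNReal.ofReal (p ^ ⌈(m : ℝ) / ((d : ℝ) + 1)⌉₊) :=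
  all_present_bound_general G F m hF
end

section
/- Let G ~ G_{n,p,d} be any d-dependent random graph distribution with dependency graph D, and say a pair e₁ relies on a pair e₂ iff e₁ = e₂ or e₁ and e₂ are adjacent in D. Let H be a finite graph with no isolated vertices, let 𝓗 denote the set of all copies of H in the complete graph on {1,…,n} (images of injective maps from V(H), counted as subgraphs), and let 𝓗' ⊆ 𝓗 be the set of internally uncorrelated copies, i.e., copies S such that no edge of S relies on any other (distinct) edge of S. Then |𝓗'| ≥ |𝓗|·(1 − d·|E(H)|·|V(H)|/n). -/
open MeasureTheory ProbabilityTheory Filter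

/-! Count injections `α → Fin n` rather than copies: since `H` has no isolated vertices, a copy
is the image of exactly as many injections as there are permutations of `α` preserving the edges
of `H`, so it suffices to bound the proportion of injections `f` whose copy is correlated. Such an
`f` maps edges `e₁ ≠ e₂` to dependent pairs, and then both `(e₁, a₁)` and `(e₂, a₂)`, with `aᵢ` a
vertex of the other edge, are pairs `(e, a)`, `a ∉ e`, for which `f a` is an endpoint of one of
the at most `d` pairs on which `f e` depends. Given `f` off `a`, this leaves at most `2d` values
for `f a`; double counting bounds the correlated injections by
`|E(H)| (|V(H)| - 2) d (n)_{|V(H)|-1}`, at most a `d |E(H)| |V(H)| / n` fraction of all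
`(n)_{|V(H)|}` injections once `|V(H)|² < 2n`, which follows from `|V(H)| ≤ 2 |E(H)|` whenever
`d |E(H)| |V(H)| < n`. -/

open Finset Function

lemma Sym2.exists_mem_notMem_of_ne_s15 {α : Type*} {e e' : Sym2 α} (hne : e ≠ e')
    (he' : ¬ e'.IsDiag) : ∃ x ∈ e', x ∉ e := by
  classical
  by_contra! hsub
  have hcard : #e.toFinset ≤ #e'.toFinset := by
    rw [Sym2.card_toFinset_of_not_isDiag _ he', Sym2.card_toFinset]
    split_ifs <;> norm_num
  have heq := eq_of_subset_of_card_le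
    (fun x hx => Sym2.mem_toFinset.2 (hsub x (Sym2.mem_toFinset.1 hx))) hcard
  exact hne (Sym2.ext fun x => by rw [← Sym2.mem_toFinset, ← heq, Sym2.mem_toFinset])

lemma Nat.sub_two_mul_mul_descFactorial_pred_le {n A : ℕ} (hA : A * A < 2 * n) :
    (A - 2) * n * n.descFactorial (A - 1) ≤ A * n.descFactorial A := by
  obtain _ | _ | B := A
  · simp
  · simp
  have hB : B + 1 < n := by nlinarith
  rw [Nat.descFactorial_succ, show B + 1 + 1 - 2 = B by omega,
    show B + 1 + 1 - 1 = B + 1 by omega, ← mul_assoc, mul_comm (B + 1 + 1)]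
  refine Nat.mul_le_mul_right _ ?_
  zify [hB.le]
  nlinarith

section Counting

variable {α β γ : Type*}

lemma Set.ncard_eq_mul_ncard_image {s : Set α} (hs : s.Finite) (π : α → γ) {c : ℕ}
    (hc : ∀ x ∈ s, {y ∈ s | π y = π x}.ncard = c) : s.ncard = c * (π '' s).ncard := by
  classical
  obtain ⟨t, rfl⟩ := hs.exists_finset_coe
  rw [← coe_image, Set.ncard_coe_finset, Set.ncard_coe_finset, card_eq_sum_card_image π t,
    sum_const_nat (m := c), mul_comm]
  rintro _ hy
  obtain ⟨x, hx, rfl⟩ := Finset.mem_image.1 hy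
  rw [← hc x hx, ← Set.ncard_coe_finset, coe_filter]
  rfl

lemma ncard_setOf_injective [Fintype α] [Fintype β] :
    {f : α → β | Injective f}.ncard = (Fintype.card β).descFactorial (Fintype.card α) := by
  classical
  rw [← Nat.card_coe_set_eq, Set.coe_ofPred,
    Nat.card_congr (Equiv.subtypeInjectiveEquivEmbedding α β), Nat.card_eq_fintype_card,
    Fintype.card_embedding_eq]

lemma ncard_injective_apply_mem_le [Fintype α] [Fintype β] (a : α)
    (T : (α → β) → Set β) {k : ℕ} (hT : ∀ f, (T f).ncard ≤ k)
    (hTa : ∀ f g, (∀ x ≠ a, f x = g x) → T f = T g) :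
    {f : α → β | Injective f ∧ f a ∈ T f}.ncard ≤
      k * (Fintype.card β).descFactorial (Fintype.card α - 1) := by
  classical
  set s : Finset (α → β) := {f | Injective f ∧ f a ∈ T f}
  let restrict (f : α → β) : {x // x ≠ a} → β := fun x => f x
  -- A fibre of `restrict` is determined by the values at `a`, which all lie in one `T f₀`.
  have hfiber : ∀ r ∈ s.image restrict, #{f ∈ s | restrict f = r} ≤ k := by
    intro r hr
    obtain ⟨f₀, -, rfl⟩ := mem_image.1 hr
    have hagree : ∀ f ∈ {f ∈ s | restrict f = restrict f₀}, ∀ x ≠ a, f x = f₀ x :=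
      fun f hf x hx => congrFun (mem_filter.1 hf).2 ⟨x, hx⟩
    refine (card_le_card_of_injOn (fun f => f a) (t := (Set.toFinite (T f₀)).toFinset)
      (fun f hf => ?_) (fun f hf g hg hfg => ?_)).trans ?_
    · simpa [← hTa f f₀ (hagree f hf), s] using (mem_filter.1 (mem_filter.1 hf).1).2.2
    · funext x
      by_cases hx : x = a
      · exact hx ▸ hfg
      · rw [hagree f hf x hx, hagree g hg x hx]
    · rw [← Set.ncard_eq_toFinset_card]
      exact hT f₀
  have himage : (↑(s.image restrict) : Set ({x // x ≠ a} → β)) ⊆ {r | Injective r} := by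
    intro r hr
    obtain ⟨f, hf, rfl⟩ := mem_image.1 hr
    exact fun x y hxy => Subtype.ext ((mem_filter.1 hf).2.1 hxy)
  calc {f : α → β | Injective f ∧ f a ∈ T f}.ncard = #s := by
        rw [← Set.ncard_coe_finset, coe_filter]; simp
    _ ≤ k * #(s.image restrict) := card_le_mul_card_image s k hfiber
    _ ≤ k * (Fintype.card β).descFactorial (Fintype.card α - 1) := by
        rw [← Set.ncard_coe_finset]
        refine Nat.mul_le_mul_left k ((Set.ncard_le_ncard himage (Set.toFinite _)).trans ?_)
        rw [ncard_setOf_injective, Fintype.card_subtype_compl, Fintype.card_subtype_eq]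

end Counting

namespace SimpleGraph

variable {α V W : Type*} (H : SimpleGraph α)

def copyEdges (f : α → V) : Set (Sym2 V) := Sym2.map f '' H.edgeSet

def copies (V : Type*) : Set (Set (Sym2 V)) := H.copyEdges '' {f : α → V | Injective f}

def nonIncidentPairs [Fintype α] [DecidableEq α] [Fintype H.edgeSet] : Finset (Sym2 α × α) :=
  {p ∈ H.edgeFinset ×ˢ univ | p.2 ∉ p.1}

lemma card_nonIncidentPairs [Fintype α] [DecidableEq α] [Fintype H.edgeSet] :
    #H.nonIncidentPairs = #H.edgeFinset * (Fintype.card α - 2) := by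
  rw [nonIncidentPairs, card_filter, sum_product, ← smul_eq_mul, ← sum_const]
  refine sum_congr rfl fun e he => ?_
  have hfilter : ({a | a ∈ e} : Finset α) = e.toFinset := by ext; simp
  rw [← card_filter, filter_not, hfilter, card_univ_sdiff,
    Sym2.card_toFinset_of_not_isDiag _ (H.not_isDiag_of_mem_edgeSet (mem_edgeFinset.1 he))]

lemma copyEdges_comp (g : V → W) (f : α → V) :
    H.copyEdges (g ∘ f) = Sym2.map g '' H.copyEdges f := by
  simp only [copyEdges, Set.image_image, Sym2.map_map]

variable {H}

lemma card_le_two_mul_card_edgeFinset [Fintype α] [Fintype H.edgeSet]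
    (hiso : ∀ v, ∃ u, H.Adj v u) : Fintype.card α ≤ 2 * #H.edgeFinset := by
  classical
  calc Fintype.card α = ∑ _v : α, 1 := by simp
    _ ≤ ∑ v, H.degree v := sum_le_sum fun v _ =>
        (hiso v).elim fun u hu => (H.degree_pos_iff_exists_adj v).2 ⟨u, hu⟩
    _ = 2 * #H.edgeFinset := by convert H.sum_degrees_eq_twice_card_edges

lemma mem_range_of_copyEdges_eq (hiso : ∀ v, ∃ u, H.Adj v u) {f g : α → V}
    (h : H.copyEdges g = H.copyEdges f) (x : α) : g x ∈ Set.range f := by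
  obtain ⟨y, hxy⟩ := hiso x
  obtain ⟨e, -, he⟩ : Sym2.map g s(x, y) ∈ H.copyEdges f := h ▸ ⟨_, hxy, rfl⟩
  obtain ⟨a, -, ha⟩ := Sym2.mem_map.1 (he ▸ Sym2.mem_map.2 ⟨x, Sym2.mem_mk_left x y, rfl⟩)
  exact ⟨a, ha⟩

lemma copyEdges_eq_iff_exists_perm [Finite α] (hiso : ∀ v, ∃ u, H.Adj v u) {f g : α → V}
    (hf : Injective f) (hg : Injective g) :
    H.copyEdges g = H.copyEdges f ↔
      ∃ σ : Equiv.Perm α, H.copyEdges σ = H.edgeSet ∧ g = f ∘ σ := by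
  constructor
  · intro h
    set σ : α → α := fun x =>
      (Equiv.ofInjective f hf).symm ⟨g x, mem_range_of_copyEdges_eq hiso h x⟩
    have hfσ : f ∘ σ = g := funext fun x => Equiv.apply_ofInjective_symm hf _
    have hσ : Bijective σ :=
      Finite.injective_iff_bijective.1 (Injective.of_comp (f := f) (hfσ ▸ hg))
    refine ⟨Equiv.ofBijective σ hσ, Set.image_injective.2 (Sym2.map.injective hf) ?_, hfσ.symm⟩
    rw [← copyEdges_comp, Equiv.coe_ofBijective, hfσ, h, copyEdges]
  · rintro ⟨σ, hσ, rfl⟩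
    rw [copyEdges_comp, hσ, copyEdges]

lemma ncard_setOf_copyEdges_eq [Finite α] (hiso : ∀ v, ∃ u, H.Adj v u) {f : α → V}
    (hf : Injective f) :
    {g : α → V | Injective g ∧ H.copyEdges g = H.copyEdges f}.ncard =
      {σ : Equiv.Perm α | H.copyEdges σ = H.edgeSet}.ncard := by
  have hfiber : {g : α → V | Injective g ∧ H.copyEdges g = H.copyEdges f} =
      (fun σ : Equiv.Perm α => f ∘ σ) '' {σ | H.copyEdges σ = H.edgeSet} := by
    ext g
    constructor
    · rintro ⟨hg, h⟩
      obtain ⟨σ, hσ, rfl⟩ := (copyEdges_eq_iff_exists_perm hiso hf hg).1 h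
      exact ⟨σ, hσ, rfl⟩
    · rintro ⟨σ, hσ, rfl⟩
      have hg := hf.comp σ.injective
      exact ⟨hg, (copyEdges_eq_iff_exists_perm hiso hf hg).2 ⟨σ, hσ, rfl⟩⟩
  have hcomp : Injective fun σ : Equiv.Perm α => f ∘ σ :=
    fun σ τ h => Equiv.ext fun x => hf (congrFun h x)
  rw [hfiber, Set.ncard_image_of_injective _ hcomp]

end SimpleGraph

section Dependency

open SimpleGraph

variable {V : Type*} (D : SimpleGraph {e : Sym2 V // ¬ e.IsDiag})

def IsInternallyUncorrelated (S : Set (Sym2 V)) : Prop :=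
  ∀ e₁ e₂ : {e : Sym2 V // ¬ e.IsDiag}, ↑e₁ ∈ S → ↑e₂ ∈ S → e₁ ≠ e₂ → ¬ D.Adj e₁ e₂

def depNbrVerts (x : Sym2 V) : Set V :=
  {v | ∃ e₁ e₂ : {e : Sym2 V // ¬ e.IsDiag}, ↑e₁ = x ∧ D.Adj e₁ e₂ ∧ v ∈ (e₂ : Sym2 V)}

variable {D}

lemma ncard_depNbrVerts_le [Finite V] {d : ℕ} (hdeg : ∀ e, (D.neighborSet e).ncard ≤ d)
    (x : Sym2 V) : (depNbrVerts D x).ncard ≤ 2 * d := by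
  classical
  by_cases hx : x.IsDiag
  · have hempty : depNbrVerts D x = ∅ :=
      Set.eq_empty_of_forall_notMem fun v ⟨e₁, _, he₁, _⟩ => e₁.2 (he₁ ▸ hx)
    simp [hempty]
  set t := (D.neighborSet ⟨x, hx⟩).toFinite.toFinset
  have hsub : depNbrVerts D x ⊆ ⋃ e₂ ∈ t, ((e₂ : Sym2 V).toFinset : Set V) := by
    rintro v ⟨e₁, e₂, rfl, hadj, hv⟩
    exact Set.mem_biUnion ((Set.Finite.mem_toFinset _).2 hadj) (Sym2.mem_toFinset.2 hv)
  calc (depNbrVerts D x).ncard ≤ ∑ e₂ ∈ t, ((e₂ : Sym2 V).toFinset : Set V).ncard :=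
        (Set.ncard_le_ncard hsub (Set.toFinite _)).trans (t.set_ncard_biUnion_le _)
    _ ≤ ∑ _e₂ ∈ t, 2 := sum_le_sum fun e₂ _ => by
        rw [Set.ncard_coe_finset, Sym2.card_toFinset_of_not_isDiag _ e₂.2]
    _ ≤ 2 * d := by
        rw [sum_const, smul_eq_mul, mul_comm, ← Set.ncard_eq_toFinset_card]
        exact Nat.mul_le_mul_left 2 (hdeg _)

lemma ncard_injective_not_isInternallyUncorrelated_le {α : Type*} [Fintype α] [Fintype V]
    (H : SimpleGraph α) [Fintype H.edgeSet] {d : ℕ} (hdeg : ∀ e, (D.neighborSet e).ncard ≤ d) :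
    {f : α → V | Injective f ∧ ¬ IsInternallyUncorrelated D (H.copyEdges f)}.ncard ≤
      #H.edgeFinset * (Fintype.card α - 2) *
        (d * (Fintype.card V).descFactorial (Fintype.card α - 1)) := by
  classical
  set s : Finset (α → V) := {f | Injective f ∧ ¬ IsInternallyUncorrelated D (H.copyEdges f)}
  let r (f : α → V) (p : Sym2 α × α) : Prop := f p.2 ∈ depNbrVerts D (Sym2.map f p.1)
  have hlow : ∀ f ∈ s, 2 ≤ #(H.nonIncidentPairs.bipartiteAbove r f) := by
    intro f hf
    obtain ⟨-, -, hbad⟩ := mem_filter.1 hf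
    unfold IsInternallyUncorrelated at hbad
    push Not at hbad
    obtain ⟨e₁', e₂', ⟨e₁, he₁, hfe₁⟩, ⟨e₂, he₂, hfe₂⟩, hne, hadj⟩ := hbad
    have hne : e₁ ≠ e₂ := fun h => hne (Subtype.ext (hfe₁.symm.trans (h ▸ hfe₂)))
    obtain ⟨a₁, ha₁, ha₁'⟩ :=
      Sym2.exists_mem_notMem_of_ne_s15 hne (H.not_isDiag_of_mem_edgeSet he₂)
    obtain ⟨a₂, ha₂, ha₂'⟩ :=
      Sym2.exists_mem_notMem_of_ne_s15 hne.symm (H.not_isDiag_of_mem_edgeSet he₁)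
    refine one_lt_card.2 ⟨(e₁, a₁), ?_, (e₂, a₂), ?_, fun h => hne (congrArg Prod.fst h)⟩
    · refine mem_filter.2 ⟨mem_filter.2 ⟨by simpa using he₁, ha₁'⟩, e₁', e₂', hfe₁.symm,
        hadj, hfe₂ ▸ Sym2.mem_map.2 ⟨a₁, ha₁, rfl⟩⟩
    · refine mem_filter.2 ⟨mem_filter.2 ⟨by simpa using he₂, ha₂'⟩, e₂', e₁', hfe₂.symm,
        hadj.symm, hfe₁ ▸ Sym2.mem_map.2 ⟨a₂, ha₂, rfl⟩⟩
  have hup : ∀ p ∈ H.nonIncidentPairs, #(s.bipartiteBelow r p) ≤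
      2 * d * (Fintype.card V).descFactorial (Fintype.card α - 1) := by
    rintro ⟨e, a⟩ hp
    have ha : a ∉ e := (mem_filter.1 hp).2
    have hsub : (↑(s.bipartiteBelow r (e, a)) : Set (α → V)) ⊆
        {f | Injective f ∧ f a ∈ depNbrVerts D (Sym2.map f e)} := fun f hf => by
      obtain ⟨hfs, hfr⟩ := mem_filter.1 (mem_coe.1 hf)
      exact ⟨(mem_filter.1 hfs).2.1, hfr⟩
    refine (Set.ncard_coe_finset _ ▸ Set.ncard_le_ncard hsub (Set.toFinite _)).trans
      (ncard_injective_apply_mem_le a _ (fun f => ncard_depNbrVerts_le hdeg _) fun f g hfg => ?_)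
    rw [Sym2.map_congr fun x hx => hfg x (ne_of_mem_of_not_mem hx ha)]
  have hdouble := card_mul_le_card_mul r hlow hup
  rw [card_nonIncidentPairs] at hdouble
  calc {f : α → V | Injective f ∧ ¬ IsInternallyUncorrelated D (H.copyEdges f)}.ncard = #s := by
        simp [← Set.ncard_coe_finset, s]
    _ ≤ _ := by nlinarith [hdouble]

lemma ncard_copies_sdiff_mul_le {α : Type*} [Fintype α] [Fintype V] (H : SimpleGraph α)
    [Fintype H.edgeSet] (hiso : ∀ v, ∃ u, H.Adj v u) {d : ℕ}
    (hdeg : ∀ e, (D.neighborSet e).ncard ≤ d) :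
    (H.copies V \ {S ∈ H.copies V | IsInternallyUncorrelated D S}).ncard * Fintype.card V ≤
      (H.copies V).ncard * (d * #H.edgeFinset * Fintype.card α) := by
  set A := Fintype.card α
  set E := #H.edgeFinset
  set n := Fintype.card V
  set bad := {f : α → V | Injective f ∧ ¬ IsInternallyUncorrelated D (H.copyEdges f)}
  set c := {σ : Equiv.Perm α | H.copyEdges σ = H.edgeSet}.ncard
  have hc : 0 < c := (Set.ncard_pos (Set.toFinite _)).2 ⟨Equiv.refl α, by simp [copyEdges]⟩
  have hinj : n.descFactorial A = c * (H.copies V).ncard := by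
    rw [← ncard_setOf_injective]
    exact Set.ncard_eq_mul_ncard_image (Set.toFinite _) _
      fun f hf => ncard_setOf_copyEdges_eq hiso hf
  have hbad :
      bad.ncard = c * (H.copies V \ {S ∈ H.copies V | IsInternallyUncorrelated D S}).ncard := by
    have himage : H.copyEdges '' bad =
        H.copies V \ {S ∈ H.copies V | IsInternallyUncorrelated D S} := by
      ext S
      constructor
      · rintro ⟨f, ⟨hf, hu⟩, rfl⟩
        exact ⟨⟨f, hf, rfl⟩, fun h => hu h.2⟩
      · rintro ⟨⟨f, hf, rfl⟩, hu⟩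
        exact ⟨f, ⟨hf, fun h => hu ⟨⟨f, hf, rfl⟩, h⟩⟩, rfl⟩
    rw [← himage]
    refine Set.ncard_eq_mul_ncard_image (Set.toFinite _) _ fun f hf => ?_
    refine (congrArg Set.ncard ?_).trans (ncard_setOf_copyEdges_eq hiso hf.1)
    ext g
    constructor
    · rintro ⟨⟨hg, -⟩, h⟩
      exact ⟨hg, h⟩
    · rintro ⟨hg, h⟩
      exact ⟨⟨hg, h ▸ hf.2⟩, h⟩
  by_cases hbig : n ≤ d * E * A
  · exact (Nat.mul_le_mul_right _ (Set.ncard_le_ncard Set.sdiff_subset (Set.toFinite _))).trans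
      (Nat.mul_le_mul_left _ hbig)
  push Not at hbig
  refine Nat.le_of_mul_le_mul_left ?_ hc
  calc c * (_ * n) = bad.ncard * n := by rw [hbad, mul_assoc]
    _ ≤ E * (A - 2) * (d * n.descFactorial (A - 1)) * n :=
        Nat.mul_le_mul_right _ (ncard_injective_not_isInternallyUncorrelated_le H hdeg)
    _ = d * E * ((A - 2) * n * n.descFactorial (A - 1)) := by ring
    _ ≤ d * E * (A * n.descFactorial A) := by
        rcases Nat.eq_zero_or_pos (d * E) with h0 | hpos
        · simp [h0]
        refine Nat.mul_le_mul_left _ (Nat.sub_two_mul_mul_descFactorial_pred_le ?_)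
        have hd : 1 ≤ d := Nat.pos_of_mul_pos_right hpos
        calc A * A ≤ 2 * E * A := Nat.mul_le_mul_right _ (card_le_two_mul_card_edgeFinset hiso)
          _ ≤ 2 * (d * E * A) := by nlinarith [Nat.mul_le_mul_right (E * A) hd]
          _ < 2 * n := by omega
    _ = c * ((H.copies V).ncard * (d * E * A)) := by rw [hinj]; ring

end Dependency

theorem uncorrelated_copies_count_general {n : ℕ} {p : ℝ} {d : ℕ} (G : DepRandomGraph n p d)
    {α : Type} [Fintype α] (H : SimpleGraph α) [Fintype H.edgeSet]
    (hiso : ∀ v : α, ∃ u : α, H.Adj v u)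
    (𝓗 : Set (Set (Sym2 (Fin n))))
    (h𝓗 : 𝓗 = {S | ∃ f : α → Fin n, Function.Injective f ∧ S = Sym2.map f '' H.edgeSet})
    (𝓗' : Set (Set (Sym2 (Fin n))))
    (h𝓗' : 𝓗' = {S | S ∈ 𝓗 ∧ ∀ e₁ e₂ : EdgeIdx n,
        ↑e₁ ∈ S → ↑e₂ ∈ S → e₁ ≠ e₂ → ¬ G.D.Adj e₁ e₂}) :
    (𝓗.ncard : ℝ) * (1 - (d : ℝ) * H.edgeFinset.card * Fintype.card α / n) ≤
      (𝓗'.ncard : ℝ) := by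
  obtain rfl : 𝓗 = H.copies (Fin n) := by
    rw [h𝓗]
    ext S
    simp [SimpleGraph.copies, SimpleGraph.copyEdges, eq_comm]
  obtain rfl : 𝓗' = {S ∈ H.copies (Fin n) | IsInternallyUncorrelated G.D S} := h𝓗'
  rcases Nat.eq_zero_or_pos n with rfl | hn
  -- For `n = 0` the factor is `1 - x / 0 = 1`, but there are no pairs to depend on.
  · have huncorr (S : Set (Sym2 (Fin 0))) : IsInternallyUncorrelated G.D S :=
      fun e₁ => isEmptyElim e₁
    simp [huncorr]
  have hcount := ncard_copies_sdiff_mul_le H hiso G.degBound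
  rw [Fintype.card_fin] at hcount
  have hcount' :
      ((H.copies (Fin n) \ {S ∈ H.copies (Fin n) | IsInternallyUncorrelated G.D S}).ncard : ℝ) ≤
        (H.copies (Fin n)).ncard * ((d : ℝ) * #H.edgeFinset * Fintype.card α / n) := by
    rw [mul_div_assoc', le_div_iff₀ (by exact_mod_cast hn)]
    exact_mod_cast hcount
  have hsplit := congrArg (Nat.cast (R := ℝ)) (Set.ncard_sdiff_add_ncard_of_subset
    (Set.sep_subset _ (IsInternallyUncorrelated G.D)) (Set.toFinite (H.copies (Fin n))))
  push_cast at hsplit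
  rw [mul_one_sub]
  linarith

/-- **Internally uncorrelated copies.** Let `H` be a finite graph with no isolated vertices,
let `𝓗` be the set of copies of `H` in the complete graph on `Fin n` (identified with their
edge sets), and let `𝓗'` be the internally uncorrelated copies, i.e. those none of whose
(distinct) edges rely on one another, where `e₁` relies on `e₂` iff `e₁ = e₂` or `e₁, e₂`
are adjacent in the dependency graph.  Then `|𝓗'| ≥ |𝓗| (1 − d|E(H)||V(H)|/n)`. -/
theorem uncorrelated_copies_count {n : ℕ} {p : ℝ} {d : ℕ} (G : DepRandomGraph n p d)
    {α : Type} [Fintype α] [DecidableEq α] (H : SimpleGraph α) [Fintype H.edgeSet]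
    (hiso : ∀ v : α, ∃ u : α, H.Adj v u)
    (𝓗 : Set (Set (Sym2 (Fin n))))
    (h𝓗 : 𝓗 = {S | ∃ f : α → Fin n, Function.Injective f ∧ S = Sym2.map f '' H.edgeSet})
    (𝓗' : Set (Set (Sym2 (Fin n))))
    (h𝓗' : 𝓗' = {S | S ∈ 𝓗 ∧ ∀ e₁ e₂ : EdgeIdx n,
        ↑e₁ ∈ S → ↑e₂ ∈ S → e₁ ≠ e₂ → ¬ G.D.Adj e₁ e₂}) :
    (𝓗.ncard : ℝ) * (1 - (d : ℝ) * H.edgeFinset.card * Fintype.card α / n) ≤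
      (𝓗'.ncard : ℝ) :=
  uncorrelated_copies_count_general G H hiso 𝓗 h𝓗 𝓗' h𝓗'
end

section
/- For every real y > 0, (1+y)·ln(1+y) − y ≥ (5y/8)·ln(5y/4). -/
/-!
Comparing `ln(5y/4)` with `ln(1+y)` through `ln u ≤ u − 1` is exact at `y = 4`, close to where the
inequality is tightest (`y ≈ 4.5`, with a margin of about `0.02`), and reduces it to the bound
`ln x ≥ (x−1)(37x−25) / (4x(3x+5))` for `x = 1+y`. That bound follows on three ranges of `x` from
the third-order estimates `2(x−a)/(x+a) ≤ ln(x/a)` for `x ≥ a` and `ln(a/x) ≤ (a/x − x/a)/2` for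
`x ≤ a`, anchored at `a = 1` and `a = 11/2`, where `ln(11/2) > 17/10` because `e^17 < (11/2)^10`.
-/

open Real

lemma two_mul_sub_one_div_add_one_le_log {u : ℝ} (hu : 1 ≤ u) :
    2 * (u - 1) / (u + 1) ≤ log u := by
  have h := le_hasSum (hasSum_log_one_add (sub_nonneg.2 hu)) 0 (fun _ _ => by positivity)
  simpa [mul_div_assoc, show u - 1 + 2 = u + 1 by ring] using h

lemma log_le_sub_inv_div_two {u : ℝ} (hu : 1 ≤ u) : log u ≤ (u - u⁻¹) / 2 := by
  rw [← sinh_log (by linarith)]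
  exact self_le_sinh_iff.2 (log_nonneg hu)

lemma log_add_two_mul_div_le_log {a x : ℝ} (ha : 0 < a) (hax : a ≤ x) :
    log a + 2 * (x - a) / (x + a) ≤ log x := by
  have h := two_mul_sub_one_div_add_one_le_log ((one_le_div ha).2 hax)
  rw [log_div (by linarith) ha.ne'] at h
  have h_eq : 2 * (x / a - 1) / (x / a + 1) = 2 * (x - a) / (x + a) := by
    field_simp
  linarith

lemma log_sub_div_two_le_log {a x : ℝ} (hx : 0 < x) (hxa : x ≤ a) :
    log a - (a / x - x / a) / 2 ≤ log x := by
  have h := log_le_sub_inv_div_two ((one_le_div hx).2 hxa)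
  rw [log_div (by linarith) hx.ne', inv_div] at h
  linarith

lemma log_le_log_add_div_sub_one {a b : ℝ} (ha : 0 < a) (hb : 0 < b) :
    log a ≤ log b + a / b - 1 := by
  have h := log_le_sub_one_of_pos (div_pos ha hb)
  rw [log_div ha.ne' hb.ne'] at h
  linarith

lemma seventeen_div_ten_lt_log_eleven_div_two : 17 / 10 < log (11 / 2) := by
  rw [lt_log_iff_exp_lt (by norm_num)]
  refine lt_of_pow_lt_pow_left₀ 10 (by norm_num) ?_
  calc exp (17 / 10) ^ 10 = exp 1 ^ 17 := by rw [← exp_nat_mul, ← exp_nat_mul]; norm_num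
    _ < 2.7182818286 ^ 17 := by gcongr; exact exp_one_lt_d9
    _ < (11 / 2) ^ 10 := by norm_num

lemma sub_one_mul_div_le_log {x : ℝ} (hx : 1 ≤ x) :
    (x - 1) * (37 * x - 25) / (4 * x * (3 * x + 5)) ≤ log x := by
  have hx0 : 0 < x := by linarith
  have hx1 := sub_nonneg.2 hx
  rcases le_total x (5 / 2) with hA | hA
  · calc _ ≤ 2 * (x - 1) / (x + 1) := by
          rw [div_le_div_iff₀ (by positivity) (by positivity)]
          nlinarith [mul_nonneg hx1 (sub_nonneg.2 hA),
            mul_nonneg (mul_nonneg hx1 hx1) (sub_nonneg.2 hA)]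
      _ ≤ log x := two_mul_sub_one_div_add_one_le_log hx
  have h_anchor := seventeen_div_ten_lt_log_eleven_div_two
  rcases le_total x (11 / 2) with hB | hC
  · have hA' := sub_nonneg.2 hA
    have hB' := sub_nonneg.2 hB
    calc _ ≤ 17 / 10 - (11 / 2 / x - x / (11 / 2)) / 2 := by
          rw [div_le_iff₀ (by positivity)]
          field_simp
          nlinarith [mul_nonneg hA' hB', mul_nonneg (mul_nonneg hA' hA') hB',
            mul_nonneg (mul_nonneg hA' hB') hB']
      _ ≤ log x := by linarith [log_sub_div_two_le_log hx0 hB]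
  · have hC' := sub_nonneg.2 hC
    calc _ ≤ 17 / 10 + 2 * (x - 11 / 2) / (x + 11 / 2) := by
          rw [div_add_div _ _ (by norm_num) (by positivity),
            div_le_div_iff₀ (by positivity) (by positivity)]
          nlinarith [mul_nonneg hC' hC', mul_nonneg (mul_nonneg hC' hC') hC',
            mul_nonneg (mul_nonneg hC' hC') hx0.le]
      _ ≤ log x := by linarith [log_add_two_mul_div_le_log (by norm_num : (0 : ℝ) < 11 / 2) hC]

/-- For every real `y > 0`, `(1+y)·ln(1+y) − y ≥ (5y/8)·ln(5y/4)`. -/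
theorem phi_lower_bound (y : ℝ) (hy : 0 < y) :
    (1 + y) * Real.log (1 + y) - y ≥ (5 * y / 8) * Real.log (5 * y / 4) := by
  have hx : 0 < 1 + y := by linarith
  have h_tangent := log_le_log_add_div_sub_one (by positivity : 0 < 5 * y / 4) hx
  have h_log : y * (37 * y + 12) / (4 * (1 + y) * (3 * y + 8)) ≤ log (1 + y) := by
    convert sub_one_mul_div_le_log (by linarith : 1 ≤ 1 + y) using 2 <;> ring
  calc (5 * y / 8) * log (5 * y / 4)
      ≤ (5 * y / 8) * (log (1 + y) + 5 * y / 4 / (1 + y) - 1) := by gcongr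
    _ = (1 + y) * log (1 + y) - y -
          (1 + 3 * y / 8) * (log (1 + y) - y * (37 * y + 12) / (4 * (1 + y) * (3 * y + 8))) := by
        field_simp
        ring
    _ ≤ (1 + y) * log (1 + y) - y := sub_le_self _ (mul_nonneg (by positivity) (sub_nonneg.2 h_log))
end
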